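/- arXiv:2407.06962 — 6 statements merged into one kernel-verified Lean document; each statement's English description precedes it below -/
import Mathlib

section
/- Let U, W : ℝ → ℝ be smooth, compactly supported, nonnegative, even functions such that U(x) = 1 for |x| ≤ 2 and W is supported in [−2,−1] ∪ [1,2]. Let C > 0 be a real number with Λ := Σ_{c=1}^∞ W(c/C) > 0, and define F(x,y) = C·Λ^{−1}·(W(x) − W(y))·U(x)·U(y). Then for every integer n, only finitely many terms of the double sum below are nonzero, and (1/C) Σ_{c=1}^∞ Σ_{d=1}^∞ (1/(cd)) S(0,n;c) F(cd/C, n/(cdC)) equals 1 if n = 0 and equals 0 if n ≠ 0. Moreover F is smooth and F(x,y) = 0 whenever |x| > S or |y| > S, where [−S,S] is any interval containing the support of U. -/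
/-- `e_c(x) = e^{2πix/c}`. -/
noncomputable def eadd (c : ℕ) (x : ℤ) : ℂ := Complex.exp (2 * Real.pi * Complex.I * x / c)

/-- The Kloosterman sum `S(m,n;c) = Σ_{x mod c, (x,c)=1} e_c(m x + n x̄)`. -/
noncomputable def Kl (m n : ℤ) (c : ℕ) : ℂ :=
  ∑ t ∈ Finset.filter (fun t => Nat.Coprime t c) (Finset.range c),
    eadd c (m * t + n * ((((t : ZMod c)⁻¹).val : ℕ) : ℤ))

lemma deltaAux_L1 (q : ℕ) (hq : 0 < q) (n : ℤ) :
    ∑ x ∈ Finset.range q, eadd q (n * x) = if (q:ℤ) ∣ n then (q:ℂ) else 0 := by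
  have hq0 : (q:ℂ) ≠ 0 := Nat.cast_ne_zero.mpr hq.ne'
  set ζ : ℂ := eadd q n with hζ
  have hpow : ∀ x : ℕ, eadd q (n * x) = ζ ^ x := by
    intro x
    rw [hζ, eadd, eadd, ← Complex.exp_nat_mul]
    congr 1
    push_cast
    ring
  have hζq : ζ ^ q = 1 := by
    rw [hζ, eadd, ← Complex.exp_nat_mul]
    have : (q:ℂ) * (2 * Real.pi * Complex.I * n / q) = n * (2 * Real.pi * Complex.I) := by
      field_simp
    rw [this, Complex.exp_int_mul_two_pi_mul_I]
  simp only [hpow]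
  by_cases hdvd : (q:ℤ) ∣ n
  · obtain ⟨k, hk⟩ := id hdvd
    have hζ1 : ζ = 1 := by
      rw [hζ, eadd, hk]
      have : 2 * Real.pi * Complex.I * (↑(↑q * k) : ℤ) / q = (k:ℂ) * (2 * Real.pi * Complex.I) := by
        push_cast; field_simp
      rw [this, Complex.exp_int_mul_two_pi_mul_I]
    simp [hζ1, hdvd]
  · have hpi : (2 * Real.pi * Complex.I : ℂ) ≠ 0 := by
      simp [Real.pi_ne_zero, Complex.I_ne_zero, Complex.ofReal_ne_zero]
    have hζ1 : ζ ≠ 1 := by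
      intro h
      rw [hζ, eadd, Complex.exp_eq_one_iff] at h
      obtain ⟨k, hk⟩ := h
      apply hdvd
      refine ⟨k, ?_⟩
      have hc : (n : ℂ) = (q:ℂ) * k := by
        have h2 : (2 * Real.pi * Complex.I) * (n:ℂ) = (2 * Real.pi * Complex.I) * ((q:ℂ) * k) := by
          field_simp at hk
          linear_combination (2 * Real.pi * Complex.I) * hk
        exact mul_left_cancel₀ hpi h2
      exact_mod_cast hc
    rw [geom_sum_eq hζ1, hζq]
    simp [hdvd]

lemma deltaAux_L2 (c : ℕ) (hc : 0 < c) (n : ℤ) :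
    Kl 0 n c = ∑ t ∈ Finset.filter (fun t => Nat.Coprime t c) (Finset.range c), eadd c (n * t) := by
  haveI : NeZero c := ⟨hc.ne'⟩
  have hmem : ∀ t ∈ Finset.filter (fun t => Nat.Coprime t c) (Finset.range c),
      (((t : ZMod c)⁻¹).val : ℕ) ∈ Finset.filter (fun t => Nat.Coprime t c) (Finset.range c) := by
    intro t ht
    simp only [Finset.mem_filter, Finset.mem_range] at ht ⊢
    obtain ⟨htl, htc⟩ := ht
    have hu : ((t : ZMod c))⁻¹ = ((ZMod.unitOfCoprime t htc)⁻¹ : (ZMod c)ˣ) := by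
      rw [← ZMod.coe_unitOfCoprime t htc, ZMod.inv_coe_unit]
    exact ⟨ZMod.val_lt _, by rw [hu]; exact ZMod.val_coe_unit_coprime _⟩
  have hinv : ∀ t ∈ Finset.filter (fun t => Nat.Coprime t c) (Finset.range c),
      ((((((t : ZMod c)⁻¹).val : ℕ) : ZMod c)⁻¹).val : ℕ) = t := by
    intro t ht
    simp only [Finset.mem_filter, Finset.mem_range] at ht
    obtain ⟨htl, htc⟩ := ht
    have h1 : (((((t : ZMod c)⁻¹).val : ℕ)) : ZMod c) = (t : ZMod c)⁻¹ := by
      rw [ZMod.natCast_val, ZMod.cast_id]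
    rw [h1]
    have h2 : ((t : ZMod c)⁻¹)⁻¹ = (t : ZMod c) := by
      rw [← ZMod.coe_unitOfCoprime t htc, ZMod.inv_coe_unit, ZMod.inv_coe_unit, inv_inv]
    rw [h2, ZMod.val_cast_of_lt htl]
  rw [Kl]
  simp only [zero_mul, zero_add]
  exact Finset.sum_nbij' (fun t => (((t : ZMod c)⁻¹).val : ℕ))
    (fun t => (((t : ZMod c)⁻¹).val : ℕ)) hmem hmem hinv hinv (fun t ht => rfl)

lemma deltaAux_L3 (q : ℕ) (hq : 0 < q) (n : ℤ) :
    ∑ c ∈ q.divisors, ∑ t ∈ Finset.filter (fun t => Nat.Coprime t c) (Finset.range c),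
      eadd c (n * t) = ∑ x ∈ Finset.range q, eadd q (n * x) := by
  rw [Finset.sum_sigma']
  refine Finset.sum_nbij' (fun p => (q / p.1) * p.2)
    (fun x => ⟨q / Nat.gcd x q, x / Nat.gcd x q⟩) ?_ ?_ ?_ ?_ ?_
  · rintro ⟨c, t⟩ hp
    simp only [Finset.mem_sigma, Nat.mem_divisors, Finset.mem_filter, Finset.mem_range] at hp ⊢
    obtain ⟨⟨hcq, -⟩, htl, -⟩ := hp
    have hc : 0 < c := Nat.pos_of_mem_divisors (Nat.mem_divisors.mpr ⟨hcq, hq.ne'⟩)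
    have hqc : 0 < q / c := Nat.div_pos (Nat.le_of_dvd hq hcq) hc
    calc q / c * t < q / c * c := by exact mul_lt_mul_of_pos_left htl hqc
      _ = q := Nat.div_mul_cancel hcq
  · intro x hx
    simp only [Finset.mem_range] at hx
    have hx0 : 0 < Nat.gcd x q := Nat.gcd_pos_of_pos_right _ hq
    simp only [Finset.mem_sigma, Nat.mem_divisors, Finset.mem_filter, Finset.mem_range]
    refine ⟨⟨Nat.div_dvd_of_dvd (Nat.gcd_dvd_right x q), hq.ne'⟩,
      Nat.div_lt_div_of_lt_of_dvd (Nat.gcd_dvd_right x q) hx, Nat.coprime_div_gcd_div_gcd hx0⟩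
  · rintro ⟨c, t⟩ hp
    simp only [Finset.mem_sigma, Nat.mem_divisors, Finset.mem_filter, Finset.mem_range] at hp
    obtain ⟨⟨hcq, -⟩, htl, htc⟩ := hp
    have hc : 0 < c := Nat.pos_of_dvd_of_pos hcq hq
    have hqc : 0 < q / c := Nat.div_pos (Nat.le_of_dvd hq hcq) hc
    have hg : Nat.gcd (q / c * t) q = q / c := by
      calc Nat.gcd (q / c * t) q = Nat.gcd (q / c * t) (q / c * c) := by
            rw [Nat.div_mul_cancel hcq]
        _ = q / c * Nat.gcd t c := Nat.gcd_mul_left _ _ _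
        _ = q / c := by rw [htc, mul_one]
    ext
    · simp only [hg, Nat.div_div_self hcq hq.ne']
    · simp only [hg]
      rw [Nat.mul_div_cancel_left t hqc]
  · intro x hx
    have hgx : Nat.gcd x q ∣ x := Nat.gcd_dvd_left x q
    have hgq : Nat.gcd x q ∣ q := Nat.gcd_dvd_right x q
    simp only
    rw [Nat.div_div_self hgq hq.ne', Nat.mul_div_cancel' hgx]
  · rintro ⟨c, t⟩ hp
    simp only [Finset.mem_sigma, Nat.mem_divisors, Finset.mem_filter, Finset.mem_range] at hp
    obtain ⟨⟨hcq, -⟩, htl, htc⟩ := hp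
    have hc : 0 < c := Nat.pos_of_dvd_of_pos hcq hq
    simp only [eadd]
    congr 1
    have keyn : (q / c * t) * c = t * q := by
      rw [mul_comm (q/c) t, mul_assoc, Nat.div_mul_cancel hcq]
    have key : (((q / c : ℕ)) : ℂ) * (t:ℂ) * (c:ℂ) = (t:ℂ) * (q:ℂ) := by
      rw [← Nat.cast_mul, ← Nat.cast_mul, ← Nat.cast_mul]
      exact congrArg _ keyn
    have hc0 : (c:ℂ) ≠ 0 := Nat.cast_ne_zero.mpr hc.ne'
    have hq0 : (q:ℂ) ≠ 0 := Nat.cast_ne_zero.mpr hq.ne'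
    rw [div_eq_div_iff hc0 hq0]
    simp only [Int.cast_mul, Int.cast_natCast, Nat.cast_mul]
    linear_combination (-2 * (Real.pi:ℂ) * Complex.I * (n:ℂ)) * key

lemma deltaAux_L4 (q : ℕ) (hq : 0 < q) (n : ℤ) :
    ∑ c ∈ q.divisors, Kl 0 n c = if (q:ℤ) ∣ n then (q:ℂ) else 0 := by
  rw [← deltaAux_L1 q hq n, ← deltaAux_L3 q hq n]
  exact Finset.sum_congr rfl fun c hc => deltaAux_L2 c (Nat.pos_of_mem_divisors hc) n

/-- The DFI-type delta symbol identity (Lemma 3.1 of Leung / Lemma `DeltaCor`):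
for `U, W` smooth, compactly supported, nonnegative, even, with `U ≡ 1` on `[-2,2]`
and `W` supported in `[-2,-1] ∪ [1,2]`, and `F(x,y) = C Λ⁻¹ (W(x) - W(y)) U(x) U(y)`,
the double sum `(1/C) Σ_{c,d ≥ 1} (cd)⁻¹ S(0,n;c) F(cd/C, n/(cdC))` has finitely many
nonzero terms and detects `n = 0`.  Moreover `F` is smooth and vanishes when
`|x| > S` or `|y| > S` for any `S` with `supp U ⊆ [-S,S]`. -/
theorem delta_symbol
    (U W : ℝ → ℝ)
    (hU_smooth : ContDiff ℝ (⊤ : ℕ∞) U) (hW_smooth : ContDiff ℝ (⊤ : ℕ∞) W)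
    (hU_compact : HasCompactSupport U) (hW_compact : HasCompactSupport W)
    (hU_nonneg : ∀ x, 0 ≤ U x) (hW_nonneg : ∀ x, 0 ≤ W x)
    (hU_even : ∀ x, U (-x) = U x) (hW_even : ∀ x, W (-x) = W x)
    (hU_one : ∀ x : ℝ, |x| ≤ 2 → U x = 1)
    (hW_supp : Function.support W ⊆ Set.Icc (-2 : ℝ) (-1) ∪ Set.Icc (1 : ℝ) 2)
    (C : ℝ) (hC : 0 < C)
    (Λ : ℝ) (hΛ_def : Λ = ∑' c : ℕ+, W ((c : ℝ) / C)) (hΛ_pos : 0 < Λ)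
    (F : ℝ → ℝ → ℝ)
    (hF_def : ∀ x y, F x y = C * Λ⁻¹ * (W x - W y) * U x * U y) :
    (∀ n : ℤ,
      (Function.support (fun p : ℕ+ × ℕ+ =>
        (1 / ((p.1 : ℂ) * (p.2 : ℂ))) * Kl 0 n p.1 *
          (F (((p.1 : ℝ) * (p.2 : ℝ)) / C) ((n : ℝ) / ((p.1 : ℝ) * (p.2 : ℝ) * C)) : ℂ))).Finite
      ∧
      (1 / (C : ℂ)) * (∑' p : ℕ+ × ℕ+,
        (1 / ((p.1 : ℂ) * (p.2 : ℂ))) * Kl 0 n p.1 *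
          (F (((p.1 : ℝ) * (p.2 : ℝ)) / C) ((n : ℝ) / ((p.1 : ℝ) * (p.2 : ℝ) * C)) : ℂ))
        = if n = 0 then 1 else 0)
    ∧ ContDiff ℝ (⊤ : ℕ∞) (fun p : ℝ × ℝ => F p.1 p.2)
    ∧ (∀ S : ℝ, Function.support U ⊆ Set.Icc (-S) S →
        ∀ x y : ℝ, (S < |x| ∨ S < |y|) → F x y = 0) := by
  classical
  -- basic facts about W and U
  have hWz : ∀ x : ℝ, 2 < |x| → W x = 0 := by
    intro x hx
    by_contra h
    have hx2 : |x| ≤ 2 := by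
      rcases hW_supp h with h1 | h1
      · rw [abs_le]; exact ⟨h1.1, by linarith [h1.2]⟩
      · rw [abs_le]; exact ⟨by linarith [h1.1], h1.2⟩
    linarith
  have hW0 : W 0 = 0 := by
    by_contra h
    rcases hW_supp h with h1 | h1
    · rw [Set.mem_Icc] at h1; linarith [h1.2]
    · rw [Set.mem_Icc] at h1; linarith [h1.1]
  have hWabs : ∀ x : ℝ, W |x| = W x := by
    intro x
    rcases abs_cases x with ⟨h, -⟩ | ⟨h, -⟩
    · rw [h]
    · rw [h, hW_even]
  have hUabs : ∀ x : ℝ, U |x| = U x := by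
    intro x
    rcases abs_cases x with ⟨h, -⟩ | ⟨h, -⟩
    · rw [h]
    · rw [h, hU_even]
  have hU0 : U 0 = 1 := hU_one 0 (by norm_num)
  have hWU : ∀ x : ℝ, W x * U x = W x := by
    intro x
    by_cases h : W x = 0
    · rw [h, zero_mul]
    · have : ¬ (2 < |x|) := fun hc => h (hWz x hc)
      rw [hU_one x (not_lt.mp this), mul_one]
  -- bound for the support of U
  obtain ⟨r, hr⟩ := hU_compact.isCompact.isBounded.subset_closedBall 0
  set A : ℝ := max r 2 with hA
  have hA2 : (2:ℝ) ≤ A := le_max_right _ _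
  have hUz : ∀ x : ℝ, A < |x| → U x = 0 := by
    intro x hx
    apply image_eq_zero_of_notMem_tsupport
    intro hmem
    have h1 := hr hmem
    rw [Metric.mem_closedBall, Real.dist_eq, sub_zero] at h1
    have : r ≤ A := le_max_left _ _
    linarith
  -- part 3: vanishing of F
  have part3 : ∀ S : ℝ, Function.support U ⊆ Set.Icc (-S) S →
      ∀ x y : ℝ, (S < |x| ∨ S < |y|) → F x y = 0 := by
    intro S hS x y hxy
    have hUS : ∀ z : ℝ, S < |z| → U z = 0 := by
      intro z hz
      by_contra h
      have h2 := hS h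
      rw [Set.mem_Icc] at h2
      rw [lt_abs] at hz
      rcases hz with h1 | h1 <;> linarith [h2.1, h2.2]
    rcases hxy with h | h <;> rw [hF_def, hUS _ h] <;> ring
  -- part 2: smoothness
  have part2 : ContDiff ℝ (⊤ : ℕ∞) (fun p : ℝ × ℝ => F p.1 p.2) := by
    have heq : (fun p : ℝ × ℝ => F p.1 p.2)
        = fun p : ℝ × ℝ => C * Λ⁻¹ * (W p.1 - W p.2) * U p.1 * U p.2 := by
      funext p; rw [hF_def]
    rw [heq]
    exact ((contDiff_const.mul ((hW_smooth.comp contDiff_fst).sub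
      (hW_smooth.comp contDiff_snd))).mul (hU_smooth.comp contDiff_fst)).mul
      (hU_smooth.comp contDiff_snd)
  have hsuppA : Function.support U ⊆ Set.Icc (-A) A := by
    intro z hz
    rw [Set.mem_Icc]
    have : ¬ (A < |z|) := fun hc => hz (hUz z hc)
    rw [not_lt, abs_le] at this
    exact this
  have hFA := part3 A hsuppA
  -- the cutoff N
  set N : ℕ := ⌈A * C⌉₊ with hNdef
  have hN1 : 1 ≤ N := by
    rw [hNdef]
    have : (0:ℝ) < A * C := by positivity
    exact Nat.one_le_iff_ne_zero.mpr (by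
      intro h
      have := Nat.ceil_eq_zero.mp h
      linarith)
  have hbig : ∀ q : ℕ, N < q → A < (q:ℝ) / C := by
    intro q hq
    rw [lt_div_iff₀ hC]
    have h1 : (A * C : ℝ) ≤ N := Nat.le_ceil _
    have h2 : (N:ℝ) < q := by exact_mod_cast hq
    linarith
  set NP : ℕ+ := ⟨N, hN1⟩ with hNP
  refine ⟨?_, part2, part3⟩
  intro n
  set f : ℕ+ × ℕ+ → ℂ := fun p =>
    (1 / ((p.1 : ℂ) * (p.2 : ℂ))) * Kl 0 n p.1 *
      (F (((p.1 : ℝ) * (p.2 : ℝ)) / C) ((n : ℝ) / ((p.1 : ℝ) * (p.2 : ℝ) * C)) : ℂ) with hf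
  set Sfin : Finset (ℕ+ × ℕ+) :=
    (Finset.Icc 1 NP ×ˢ Finset.Icc 1 NP).filter (fun p => (p.1 : ℕ) * (p.2 : ℕ) ≤ N) with hSfin
  have hout : ∀ p : ℕ+ × ℕ+, p ∉ Sfin → f p = 0 := by
    intro p hp
    have hprod : N < (p.1 : ℕ) * (p.2 : ℕ) := by
      by_contra h
      push_neg at h
      apply hp
      rw [hSfin, Finset.mem_filter, Finset.mem_product]
      have h1 : (p.1 : ℕ) ≤ N := le_trans (Nat.le_mul_of_pos_right _ p.2.pos) h
      have h2 : (p.2 : ℕ) ≤ N := le_trans (Nat.le_mul_of_pos_left _ p.1.pos) h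
      refine ⟨⟨?_, ?_⟩, h⟩ <;> rw [Finset.mem_Icc]
      · exact ⟨p.1.one_le, by rw [← PNat.coe_le_coe]; exact h1⟩
      · exact ⟨p.2.one_le, by rw [← PNat.coe_le_coe]; exact h2⟩
    have hxA : A < ((p.1 : ℝ) * (p.2 : ℝ)) / C := by
      have := hbig ((p.1 : ℕ) * (p.2 : ℕ)) hprod
      rwa [Nat.cast_mul] at this
    have hF0 : F (((p.1 : ℝ) * (p.2 : ℝ)) / C) ((n : ℝ) / ((p.1 : ℝ) * (p.2 : ℝ) * C)) = 0 := by
      apply hFA _ _ (Or.inl _)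
      have hpos : (0:ℝ) < ((p.1 : ℝ) * (p.2 : ℝ)) / C := by positivity
      rwa [abs_of_pos hpos]
    rw [hf]
    simp only [hF0, Complex.ofReal_zero, mul_zero]
  have hsupp : (Function.support f).Finite :=
    Set.Finite.subset Sfin.finite_toSet (by
      intro p hp
      by_contra h
      exact hp (hout p h))
  refine ⟨hsupp, ?_⟩
  rw [tsum_eq_sum hout]
  -- convert to a sum over pairs of naturals
  set T : Finset (ℕ × ℕ) :=
    (Finset.Icc 1 N ×ˢ Finset.Icc 1 N).filter (fun x => x.1 * x.2 ≤ N) with hT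
  set g : ℕ × ℕ → ℂ := fun x =>
    (1 / ((x.1 : ℂ) * (x.2 : ℂ))) * Kl 0 n x.1 *
      (F (((x.1 : ℝ) * (x.2 : ℝ)) / C) ((n : ℝ) / ((x.1 : ℝ) * (x.2 : ℝ) * C)) : ℂ) with hg
  have hstep1 : ∑ p ∈ Sfin, f p = ∑ x ∈ T, g x := by
    refine Finset.sum_nbij' (fun p => ((p.1 : ℕ), (p.2 : ℕ)))
      (fun x => (x.1.toPNat', x.2.toPNat')) ?_ ?_ ?_ ?_ ?_
    · intro p hp
      rw [hSfin, Finset.mem_filter, Finset.mem_product, Finset.mem_Icc, Finset.mem_Icc] at hp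
      rw [hT, Finset.mem_filter, Finset.mem_product, Finset.mem_Icc, Finset.mem_Icc]
      obtain ⟨⟨⟨-, h1⟩, -, h2⟩, h3⟩ := hp
      exact ⟨⟨⟨p.1.one_le, by exact_mod_cast h1⟩, ⟨p.2.one_le, by exact_mod_cast h2⟩⟩, h3⟩
    · intro x hx
      rw [hT, Finset.mem_filter, Finset.mem_product, Finset.mem_Icc, Finset.mem_Icc] at hx
      rw [hSfin, Finset.mem_filter, Finset.mem_product, Finset.mem_Icc, Finset.mem_Icc]
      obtain ⟨⟨⟨h1a, h1b⟩, h2a, h2b⟩, h3⟩ := hx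
      have e1 : ((x.1.toPNat' : ℕ)) = x.1 := by rw [Nat.toPNat'_coe, if_pos (by omega : 0 < x.1)]
      have e2 : ((x.2.toPNat' : ℕ)) = x.2 := by rw [Nat.toPNat'_coe, if_pos (by omega : 0 < x.2)]
      simp only [e1, e2]
      refine ⟨⟨⟨x.1.toPNat'.one_le, ?_⟩, x.2.toPNat'.one_le, ?_⟩, h3⟩ <;>
        rw [← PNat.coe_le_coe] <;> simp only [e1, e2] <;> assumption
    · intro p hp
      have e1 : ((p.1 : ℕ)).toPNat' = p.1 := by
        apply PNat.coe_injective
        rw [Nat.toPNat'_coe, if_pos p.1.pos]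
      have e2 : ((p.2 : ℕ)).toPNat' = p.2 := by
        apply PNat.coe_injective
        rw [Nat.toPNat'_coe, if_pos p.2.pos]
      simp only [e1, e2]
    · intro x hx
      rw [hT, Finset.mem_filter, Finset.mem_product, Finset.mem_Icc, Finset.mem_Icc] at hx
      obtain ⟨⟨⟨h1a, -⟩, h2a, -⟩, -⟩ := hx
      have e1 : ((x.1.toPNat' : ℕ)) = x.1 := by rw [Nat.toPNat'_coe, if_pos (by omega : 0 < x.1)]
      have e2 : ((x.2.toPNat' : ℕ)) = x.2 := by rw [Nat.toPNat'_coe, if_pos (by omega : 0 < x.2)]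
      exact Prod.ext e1 e2
    · intro p hp
      rfl
  rw [hstep1]
  -- group the sum according to q = c * d
  have hmap : ∀ x ∈ T, x.1 * x.2 ∈ Finset.Icc 1 N := by
    intro x hx
    rw [hT, Finset.mem_filter, Finset.mem_product, Finset.mem_Icc, Finset.mem_Icc] at hx
    obtain ⟨⟨⟨h1a, -⟩, h2a, -⟩, h3⟩ := hx
    exact Finset.mem_Icc.mpr ⟨Nat.one_le_iff_ne_zero.mpr (Nat.mul_ne_zero (by omega) (by omega)), h3⟩
  rw [← Finset.sum_fiberwise_of_maps_to hmap g]
  -- evaluate each fiber via the Ramanujan sum identity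
  have hstep3 : ∀ q ∈ Finset.Icc 1 N, ∑ x ∈ T.filter (fun x => x.1 * x.2 = q), g x
      = (if (q:ℤ) ∣ n then (q:ℂ) else 0)
        * ((1 / (q:ℂ)) * (F ((q:ℝ)/C) ((n:ℝ)/((q:ℝ)*C)) : ℂ)) := by
    intro q hq
    rw [Finset.mem_Icc] at hq
    obtain ⟨hq1, hqN⟩ := hq
    have hq0 : 0 < q := hq1
    have hfib : ∑ x ∈ T.filter (fun x => x.1 * x.2 = q), g x
        = ∑ c ∈ q.divisors,
            Kl 0 n c * ((1 / (q:ℂ)) * (F ((q:ℝ)/C) ((n:ℝ)/((q:ℝ)*C)) : ℂ)) := by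
      refine Finset.sum_nbij' (fun x => x.1) (fun c => (c, q / c)) ?_ ?_ ?_ ?_ ?_
      · intro x hx
        rw [Finset.mem_filter, hT, Finset.mem_filter] at hx
        obtain ⟨-, hxq⟩ := hx
        exact Nat.mem_divisors.mpr ⟨⟨x.2, hxq.symm⟩, hq0.ne'⟩
      · intro c hc
        rw [Nat.mem_divisors] at hc
        obtain ⟨hcq, -⟩ := hc
        have hc0 : 0 < c := Nat.pos_of_dvd_of_pos hcq hq0
        have hdq : 0 < q / c := Nat.div_pos (Nat.le_of_dvd hq0 hcq) hc0
        rw [Finset.mem_filter, hT, Finset.mem_filter, Finset.mem_product,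
          Finset.mem_Icc, Finset.mem_Icc]
        have hmul : c * (q / c) = q := Nat.mul_div_cancel' hcq
        refine ⟨⟨⟨⟨hc0, le_trans (Nat.le_of_dvd hq0 hcq) hqN⟩,
          hdq, le_trans (Nat.div_le_self q c) hqN⟩, by rw [hmul]; exact hqN⟩, hmul⟩
      · intro x hx
        rw [Finset.mem_filter, hT, Finset.mem_filter, Finset.mem_product, Finset.mem_Icc,
          Finset.mem_Icc] at hx
        obtain ⟨⟨⟨⟨h1a, -⟩, -⟩, -⟩, hxq⟩ := hx
        show (x.1, q / x.1) = x
        have h2 : q / x.1 = x.2 := by rw [← hxq, Nat.mul_div_cancel_left x.2 (by omega)]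
        rw [h2]
      · intro c hc
        rfl
      · intro x hx
        rw [Finset.mem_filter, hT, Finset.mem_filter, Finset.mem_product, Finset.mem_Icc,
          Finset.mem_Icc] at hx
        obtain ⟨⟨⟨⟨h1a, -⟩, h2a, -⟩, -⟩, hxq⟩ := hx
        have hcC : ((x.1 : ℂ)) * (x.2 : ℂ) = (q:ℂ) := by
          rw [← Nat.cast_mul, hxq]
        have hcR : ((x.1 : ℝ)) * (x.2 : ℝ) = (q:ℝ) := by
          rw [← Nat.cast_mul, hxq]
        rw [hg]
        simp only [hcC, hcR]
        ring
    rw [hfib, ← Finset.sum_mul, deltaAux_L4 q hq0 n]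
  rw [Finset.sum_congr rfl hstep3]
  -- remove the factor q * (1/q)
  have hstep4 : ∑ q ∈ Finset.Icc 1 N, (if (q:ℤ) ∣ n then (q:ℂ) else 0)
        * ((1 / (q:ℂ)) * (F ((q:ℝ)/C) ((n:ℝ)/((q:ℝ)*C)) : ℂ))
      = ∑ q ∈ (Finset.Icc 1 N).filter (fun q : ℕ => (q:ℤ) ∣ n),
          ((F ((q:ℝ)/C) ((n:ℝ)/((q:ℝ)*C)) : ℝ) : ℂ) := by
    rw [Finset.sum_filter]
    refine Finset.sum_congr rfl ?_
    intro q hq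
    rw [Finset.mem_Icc] at hq
    have hq0 : ((q:ℂ)) ≠ 0 := Nat.cast_ne_zero.mpr (by omega)
    by_cases h : (q:ℤ) ∣ n
    · rw [if_pos h, if_pos h]
      field_simp
    · rw [if_neg h, if_neg h, zero_mul]
  rw [hstep4]
  have hreal : ∑ q ∈ (Finset.Icc 1 N).filter (fun q : ℕ => (q:ℤ) ∣ n),
      ((F ((q:ℝ)/C) ((n:ℝ)/((q:ℝ)*C)) : ℝ) : ℂ)
      = (((∑ q ∈ (Finset.Icc 1 N).filter (fun q : ℕ => (q:ℤ) ∣ n),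
          F ((q:ℝ)/C) ((n:ℝ)/((q:ℝ)*C))) : ℝ) : ℂ) := by
    rw [Complex.ofReal_sum]
  rw [hreal]
  by_cases hn : n = 0
  · -- the case n = 0
    subst hn
    rw [if_pos rfl]
    have hfilter : (Finset.Icc 1 N).filter (fun q : ℕ => (q:ℤ) ∣ (0:ℤ)) = Finset.Icc 1 N :=
      Finset.filter_true_of_mem (fun q _ => dvd_zero _)
    rw [hfilter]
    have hterm : ∀ q ∈ Finset.Icc 1 N,
        F ((q:ℝ)/C) (((0:ℤ) : ℝ)/((q:ℝ)*C)) = C * Λ⁻¹ * W ((q:ℝ)/C) := by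
      intro q hq
      have : (((0:ℤ) : ℝ)/((q:ℝ)*C)) = 0 := by norm_num
      rw [this, hF_def, hW0, hU0]
      have : C * Λ⁻¹ * (W ((q:ℝ)/C) - 0) * U ((q:ℝ)/C) * 1
          = C * Λ⁻¹ * (W ((q:ℝ)/C) * U ((q:ℝ)/C)) := by ring
      rw [this, hWU]
    rw [Finset.sum_congr rfl hterm, ← Finset.mul_sum]
    have hΛsum : ∑ q ∈ Finset.Icc 1 N, W ((q:ℝ)/C) = Λ := by
      rw [hΛ_def, tsum_eq_sum (s := Finset.Icc 1 NP) ?_]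
      · refine (Finset.sum_nbij' (fun c : ℕ+ => (c:ℕ)) (fun q => q.toPNat') ?_ ?_ ?_ ?_ ?_).symm
        · intro c hc
          rw [Finset.mem_Icc] at hc ⊢
          exact ⟨c.one_le, by exact_mod_cast hc.2⟩
        · intro q hq
          rw [Finset.mem_Icc] at hq ⊢
          constructor
          · exact q.toPNat'.one_le
          · rw [← PNat.coe_le_coe]
            show ((q.toPNat' : ℕ)) ≤ (NP : ℕ)
            rw [Nat.toPNat'_coe, if_pos (by omega : 0 < q)]
            exact hq.2
        · intro c hc
          apply PNat.coe_injective
          rw [Nat.toPNat'_coe, if_pos c.pos]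
        · intro q hq
          rw [Finset.mem_Icc] at hq
          show ((q.toPNat' : ℕ)) = q
          rw [Nat.toPNat'_coe, if_pos (by omega : 0 < q)]
        · intro c hc
          rfl
      · intro c hc
        have hcN : N < (c : ℕ) := by
          by_contra h
          push_neg at h
          exact hc (Finset.mem_Icc.mpr ⟨c.one_le, by rw [← PNat.coe_le_coe] at *; exact h⟩)
        have hA' : A < ((c:ℕ):ℝ)/C := hbig _ hcN
        apply hWz
        rw [abs_of_pos (by positivity)]
        linarith
    rw [hΛsum]
    have hCΛ : C * Λ⁻¹ * Λ = C := by
      rw [mul_assoc, inv_mul_cancel₀ hΛ_pos.ne', mul_one]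
    rw [hCΛ]
    rw [one_div, inv_mul_cancel₀ (Complex.ofReal_ne_zero.mpr hC.ne')]
  · -- the case n ≠ 0
    rw [if_neg hn]
    set m : ℕ := n.natAbs with hm
    have hm0 : m ≠ 0 := Int.natAbs_ne_zero.mpr hn
    have hmpos : 0 < m := Nat.pos_of_ne_zero hm0
    have hmR : ((m:ℕ):ℝ) = |(n:ℝ)| := by
      rw [hm, Nat.cast_natAbs, Int.cast_abs]
    have hsum0 : ∑ q ∈ (Finset.Icc 1 N).filter (fun q : ℕ => (q:ℤ) ∣ n),
        F ((q:ℝ)/C) ((n:ℝ)/((q:ℝ)*C)) = 0 := by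
      have hsub : (Finset.Icc 1 N).filter (fun q : ℕ => (q:ℤ) ∣ n) ⊆ m.divisors := by
        intro q hq
        rw [Finset.mem_filter] at hq
        exact Nat.mem_divisors.mpr ⟨Int.natCast_dvd.mp hq.2, hm0⟩
      rw [Finset.sum_subset hsub ?_]
      · -- the sum over all divisors of |n| vanishes by the involution q ↦ m / q
        refine Finset.sum_involution (fun q _ => m / q) ?_ ?_ ?_ ?_
        · -- pairing
          intro q hq
          rw [Nat.mem_divisors] at hq
          obtain ⟨hdvd, -⟩ := hq
          have hq0 : 0 < q := Nat.pos_of_dvd_of_pos hdvd hmpos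
          have hq0R : (0:ℝ) < (q:ℝ) := by exact_mod_cast hq0
          have hmRpos : (0:ℝ) < (m:ℝ) := by exact_mod_cast hmpos
          have hcast : (((m / q : ℕ)):ℝ) = (m:ℝ)/(q:ℝ) := Nat.cast_div hdvd hq0R.ne'
          have hyabs : |(n:ℝ)/((q:ℝ)*C)| = (m:ℝ)/((q:ℝ)*C) := by
            rw [abs_div, abs_of_pos (by positivity : (0:ℝ) < (q:ℝ)*C), hmR]
          have hx' : (((m / q : ℕ)):ℝ)/C = |(n:ℝ)/((q:ℝ)*C)| := by
            rw [hcast, hyabs, div_div]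
          have hy' : |(n:ℝ)/((((m / q : ℕ)):ℝ)*C)| = (q:ℝ)/C := by
            rw [hcast]
            rw [abs_div, abs_of_pos (by positivity : (0:ℝ) < (m:ℝ)/(q:ℝ)*C), hmR]
            field_simp
          rw [hF_def, hF_def, hx', hWabs, hUabs,
            ← hWabs ((n:ℝ)/((((m / q : ℕ)):ℝ)*C)), ← hUabs ((n:ℝ)/((((m / q : ℕ)):ℝ)*C)), hy']
          ring
        · -- no fixed points with nonzero contribution
          intro q hq hFq
          rw [Nat.mem_divisors] at hq
          obtain ⟨hdvd, -⟩ := hq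
          have hq0 : 0 < q := Nat.pos_of_dvd_of_pos hdvd hmpos
          have hq0R : (0:ℝ) < (q:ℝ) := by exact_mod_cast hq0
          intro hfix
          apply hFq
          have hmqq : (m:ℝ) = (q:ℝ) * (q:ℝ) := by
            have := Nat.eq_mul_of_div_eq_right hdvd hfix
            exact_mod_cast this
          have habs : |(n:ℝ)/((q:ℝ)*C)| = (q:ℝ)/C := by
            rw [abs_div, abs_of_pos (by positivity : (0:ℝ) < (q:ℝ)*C), ← hmR, hmqq,
              mul_div_mul_left _ _ hq0R.ne']
          rw [hF_def, ← hWabs ((n:ℝ)/((q:ℝ)*C)), habs, sub_self]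
          ring
        · -- maps into the set
          intro q hq
          rw [Nat.mem_divisors] at hq ⊢
          exact ⟨Nat.div_dvd_of_dvd hq.1, hm0⟩
        · -- involution
          intro q hq
          rw [Nat.mem_divisors] at hq
          exact Nat.div_div_self hq.1 hm0
      · -- terms of divisors exceeding N vanish
        intro q hq hqn
        rw [Nat.mem_divisors] at hq
        obtain ⟨hdvd, -⟩ := hq
        have hq0 : 0 < q := Nat.pos_of_dvd_of_pos hdvd hmpos
        have hqN : N < q := by
          by_contra h
          push_neg at h
          apply hqn
          rw [Finset.mem_filter, Finset.mem_Icc]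
          exact ⟨⟨hq0, h⟩, Int.natCast_dvd.mpr hdvd⟩
        apply hFA
        left
        rw [abs_of_pos (by positivity : (0:ℝ) < (q:ℝ)/C)]
        exact hbig q hqN
    rw [hsum0]
    simp
end

section
/- Let λ : ℤ≥1 × ℤ≥1 → ℂ satisfy the Hecke-type relation λ(a,b) = Σ_{d | gcd(a,b)} μ(d) λ(a/d, 1) λ(1, b/d) for all a, b ≥ 1, and suppose there is a constant K such that Σ_{n ≤ x} |λ(n,1)|² ≤ K·x and Σ_{n ≤ x} |λ(1,n)|² ≤ K·x for all real x ≥ 1. Then for every ε > 0 there is a constant C(ε,K) such that for all real X ≥ 1, Σ over pairs (a,b) of positive integers with X < a²b ≤ 2X of |λ(a,b)|²/(a³b²) is at most C(ε,K)·X^{−1+ε}. -/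
/-!
Rankin's trick: on the range `X < a²b` we have `1 / (a³b²) < 1 / (X a b)`, so it suffices to show
`∑_{a, b ≤ N} |λ(a,b)|² / (ab) ≤ K² H_N⁴` with `N = ⌊2X⌋` and `H_N = ∑_{n ≤ N} 1/n ≪ log X`.
Cauchy–Schwarz with weights `1/d` applied to the Hecke relation gives
`|λ(a,b)|² ≤ H_N ∑_{d ∣ (a,b)} d |λ(a/d,1)|² |λ(1,b/d)|²`; after dividing by `ab = d² (a/d) (b/d)`
and substituting `a = d a'`, `b = d b'`, the double sum is at most `H_N` times the product of
`∑ 1/d`, `∑ |λ(a',1)|²/a'` and `∑ |λ(1,b')|²/b'`, and partial summation bounds the last two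
by `K H_N` each.
-/

open scoped ArithmeticFunction.Moebius
open Finset

theorem sum_Icc_div_le_mul_sum_inv {g : ℕ → ℝ} {K : ℝ}
    (hg : ∀ m, 1 ≤ m → ∑ n ∈ Icc 1 m, g n ≤ K * m) (N : ℕ) :
    ∑ n ∈ Icc 1 N, g n / n ≤ K * ∑ n ∈ Icc 1 N, (n : ℝ)⁻¹ := by
  rcases N.eq_zero_or_pos with rfl | hN
  · simp
  -- Partial summation, as an induction that carries the boundary term `G(N) / N`.
  have abel : ∀ N, 1 ≤ N → ∑ n ∈ Icc 1 N, g n / n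
      ≤ (∑ n ∈ Icc 1 N, g n) / N + K * (∑ n ∈ Icc 1 N, (n : ℝ)⁻¹ - 1) := by
    intro N hN
    induction N, hN using Nat.le_induction with
    | base => simp
    | succ N hN ih =>
      have hG := hg N hN
      have hN' : (0 : ℝ) < N := by exact_mod_cast hN
      have hstep : (∑ n ∈ Icc 1 N, g n) / N
          ≤ (∑ n ∈ Icc 1 N, g n) / (N + 1) + K / (N + 1) := by
        rw [← add_div, div_le_div_iff₀ hN' (by positivity)]
        nlinarith
      simp only [sum_Icc_succ_top (by omega : 1 ≤ N + 1), Nat.cast_add, Nat.cast_one]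
      calc _ ≤ (∑ n ∈ Icc 1 N, g n) / N + K * (∑ n ∈ Icc 1 N, (n : ℝ)⁻¹ - 1)
            + g (N + 1) / (N + 1) := by gcongr
        _ ≤ _ := by
          rw [add_div]
          linarith [show K * (∑ n ∈ Icc 1 N, (n : ℝ)⁻¹ + ((N : ℝ) + 1)⁻¹ - 1)
            = K * (∑ n ∈ Icc 1 N, (n : ℝ)⁻¹ - 1) + K / (N + 1) by ring]
  have hGN : (∑ n ∈ Icc 1 N, g n) / N ≤ K := by
    rw [div_le_iff₀ (by exact_mod_cast hN)]
    exact hg N hN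
  linarith [abel N hN]

theorem sum_Icc_ite_dvd_div_le {φ : ℕ → ℝ} (hφ : ∀ n, 0 ≤ φ n) {d : ℕ} (hd : 0 < d) (N : ℕ) :
    ∑ a ∈ Icc 1 N, (if d ∣ a then φ (a / d) else 0) ≤ ∑ a ∈ Icc 1 N, φ a := by
  rw [← sum_filter, ← sum_image (g := (· / d)) fun a ha b hb h =>
    (Nat.div_left_inj (mem_filter.1 ha).2 (mem_filter.1 hb).2).1 h]
  refine sum_le_sum_of_subset_of_nonneg (fun n hn => ?_) fun n _ _ => hφ n
  obtain ⟨a, ha, rfl⟩ := mem_image.1 hn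
  obtain ⟨ha, hda⟩ := mem_filter.1 ha
  rw [mem_Icc] at ha ⊢
  exact ⟨Nat.div_pos (Nat.le_of_dvd (by omega) hda) hd, (Nat.div_le_self a d).trans ha.2⟩

theorem sum_sum_divisors_gcd_le {F : ℕ → ℕ → ℕ → ℝ} (hF : ∀ d a b, 0 ≤ F d a b) (N : ℕ) :
    ∑ a ∈ Icc 1 N, ∑ b ∈ Icc 1 N, ∑ d ∈ (a.gcd b).divisors, F d (a / d) (b / d)
      ≤ ∑ d ∈ Icc 1 N, ∑ a ∈ Icc 1 N, ∑ b ∈ Icc 1 N, F d a b := by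
  have divisors_gcd : ∀ a ∈ Icc 1 N, ∀ b,
      (a.gcd b).divisors = (Icc 1 N).filter (fun d => d ∣ a ∧ d ∣ b) := by
    intro a ha b
    ext d
    simp only [Nat.mem_divisors, Nat.dvd_gcd_iff, mem_filter, mem_Icc] at ha ⊢
    constructor
    · rintro ⟨⟨hda, hdb⟩, -⟩
      have := Nat.le_of_dvd (by omega) hda
      exact ⟨⟨Nat.pos_of_dvd_of_pos hda (by omega), by omega⟩, hda, hdb⟩
    · rintro ⟨-, hd⟩
      exact ⟨hd, by simp [Nat.gcd_eq_zero_iff]; omega⟩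
  calc _ = ∑ a ∈ Icc 1 N, ∑ b ∈ Icc 1 N, ∑ d ∈ Icc 1 N,
        if d ∣ a then (if d ∣ b then F d (a / d) (b / d) else 0) else 0 := by
        refine sum_congr rfl fun a ha => sum_congr rfl fun b _ => ?_
        rw [divisors_gcd a ha, sum_filter]
        simp only [ite_and]
    _ = ∑ d ∈ Icc 1 N, ∑ a ∈ Icc 1 N, ∑ b ∈ Icc 1 N,
        if d ∣ a then (if d ∣ b then F d (a / d) (b / d) else 0) else 0 :=
        (sum_congr rfl fun a _ => sum_comm).trans sum_comm
    _ = ∑ d ∈ Icc 1 N, ∑ a ∈ Icc 1 N,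
        if d ∣ a then ∑ b ∈ Icc 1 N, (if d ∣ b then F d (a / d) (b / d) else 0) else 0 := by
        simp only [sum_ite_irrel, sum_const_zero]
    _ ≤ ∑ d ∈ Icc 1 N, ∑ a ∈ Icc 1 N,
        if d ∣ a then ∑ b ∈ Icc 1 N, F d (a / d) b else 0 := by
        gcongr with d hd a
        split_ifs
        · exact sum_Icc_ite_dvd_div_le (hF d _) (mem_Icc.1 hd).1 N
        · rfl
    _ ≤ _ := sum_le_sum fun d hd =>
        sum_Icc_ite_dvd_div_le (fun a => sum_nonneg fun b _ => hF d a b) (mem_Icc.1 hd).1 N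

theorem sq_norm_le_of_hecke {lam : ℕ → ℕ → ℂ} {a b : ℕ}
    (h : lam a b = ∑ d ∈ (a.gcd b).divisors, ((μ d : ℤ) : ℂ) * lam (a / d) 1 * lam 1 (b / d)) :
    ‖lam a b‖ ^ 2 ≤ (∑ d ∈ (a.gcd b).divisors, (d : ℝ)⁻¹) *
      ∑ d ∈ (a.gcd b).divisors, d * (‖lam (a / d) 1‖ * ‖lam 1 (b / d)‖) ^ 2 := by
  have htriangle : ‖lam a b‖ ≤ ∑ d ∈ (a.gcd b).divisors, ‖lam (a / d) 1‖ * ‖lam 1 (b / d)‖ := by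
    rw [h]
    refine (norm_sum_le _ _).trans (sum_le_sum fun d _ => ?_)
    rw [norm_mul, norm_mul, mul_assoc, Complex.norm_intCast]
    exact mul_le_of_le_one_left (by positivity) (mod_cast ArithmeticFunction.abs_moebius_le_one)
  refine (pow_le_pow_left₀ (norm_nonneg _) htriangle 2).trans ?_
  refine sum_sq_le_sum_mul_sum_of_sq_le_mul _ (fun d _ => by positivity)
    (fun d _ => by positivity) fun d hd => ?_
  have : (d : ℝ) ≠ 0 := by exact_mod_cast (Nat.pos_of_mem_divisors hd).ne'
  rw [← mul_assoc, inv_mul_cancel₀ this, one_mul]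

theorem sq_norm_div_mul_le_of_hecke {lam : ℕ → ℕ → ℂ} {a b N : ℕ} (ha : 1 ≤ a) (haN : a ≤ N)
    (h : lam a b = ∑ d ∈ (a.gcd b).divisors, ((μ d : ℤ) : ℂ) * lam (a / d) 1 * lam 1 (b / d)) :
    ‖lam a b‖ ^ 2 / (a * b) ≤ (∑ n ∈ Icc 1 N, (n : ℝ)⁻¹) * ∑ d ∈ (a.gcd b).divisors,
      (d : ℝ)⁻¹ * (‖lam (a / d) 1‖ ^ 2 / (a / d : ℕ)) * (‖lam 1 (b / d)‖ ^ 2 / (b / d : ℕ)) := by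
  have hsub : (a.gcd b).divisors ⊆ Icc 1 N := fun d hd => by
    have := Nat.divisor_le hd
    have := Nat.gcd_le_left b (show 0 < a by omega)
    exact mem_Icc.2 ⟨Nat.pos_of_mem_divisors hd, by omega⟩
  calc ‖lam a b‖ ^ 2 / (a * b)
      ≤ (∑ d ∈ (a.gcd b).divisors, (d : ℝ)⁻¹) *
          ∑ d ∈ (a.gcd b).divisors, d * (‖lam (a / d) 1‖ * ‖lam 1 (b / d)‖) ^ 2 / (a * b) := by
        rw [← sum_div, ← mul_div_assoc]
        gcongr
        exact sq_norm_le_of_hecke h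
    _ ≤ (∑ n ∈ Icc 1 N, (n : ℝ)⁻¹) *
          ∑ d ∈ (a.gcd b).divisors, d * (‖lam (a / d) 1‖ * ‖lam 1 (b / d)‖) ^ 2 / (a * b) := by
        gcongr
    _ = _ := by
        refine congrArg _ (sum_congr rfl fun d hd => ?_)
        obtain ⟨a', rfl⟩ := (Nat.dvd_of_mem_divisors hd).trans (Nat.gcd_dvd_left _ _)
        obtain ⟨b', rfl⟩ := (Nat.dvd_of_mem_divisors hd).trans (Nat.gcd_dvd_right _ _)
        simp only [Nat.mul_div_cancel_left _ (Nat.pos_of_mem_divisors hd), Nat.cast_mul]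
        field_simp

theorem sum_sq_norm_div_mul_le {lam : ℕ → ℕ → ℂ} {K : ℝ}
    (hHecke : ∀ a b : ℕ, 1 ≤ a → 1 ≤ b →
      lam a b = ∑ d ∈ (Nat.gcd a b).divisors, ((μ d : ℤ) : ℂ) * lam (a / d) 1 * lam 1 (b / d))
    (hbound1 : ∀ m, 1 ≤ m → ∑ n ∈ Icc 1 m, ‖lam n 1‖ ^ 2 ≤ K * m)
    (hbound2 : ∀ m, 1 ≤ m → ∑ n ∈ Icc 1 m, ‖lam 1 n‖ ^ 2 ≤ K * m) (N : ℕ) :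
    ∑ a ∈ Icc 1 N, ∑ b ∈ Icc 1 N, ‖lam a b‖ ^ 2 / (a * b)
      ≤ K ^ 2 * (∑ n ∈ Icc 1 N, (n : ℝ)⁻¹) ^ 4 := by
  set H := ∑ n ∈ Icc 1 N, (n : ℝ)⁻¹
  set F : ℕ → ℕ → ℕ → ℝ := fun d a b => (d : ℝ)⁻¹ * (‖lam a 1‖ ^ 2 / a) * (‖lam 1 b‖ ^ 2 / b)
  have hF : ∀ d a b, 0 ≤ F d a b := fun d a b => by positivity
  have hH : 0 ≤ H := sum_nonneg fun n _ => by positivity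
  have h1 := sum_Icc_div_le_mul_sum_inv hbound1 N
  have h2 := sum_Icc_div_le_mul_sum_inv hbound2 N
  have hB : 0 ≤ ∑ b ∈ Icc 1 N, ‖lam 1 b‖ ^ 2 / b := sum_nonneg fun n _ => by positivity
  calc _ ≤ ∑ a ∈ Icc 1 N, ∑ b ∈ Icc 1 N, H * ∑ d ∈ (a.gcd b).divisors, F d (a / d) (b / d) :=
        sum_le_sum fun a ha => sum_le_sum fun b hb =>
          sq_norm_div_mul_le_of_hecke (mem_Icc.1 ha).1 (mem_Icc.1 ha).2
            (hHecke a b (mem_Icc.1 ha).1 (mem_Icc.1 hb).1)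
    _ = H * ∑ a ∈ Icc 1 N, ∑ b ∈ Icc 1 N, ∑ d ∈ (a.gcd b).divisors, F d (a / d) (b / d) := by
        simp only [mul_sum]
    _ ≤ H * ∑ d ∈ Icc 1 N, ∑ a ∈ Icc 1 N, ∑ b ∈ Icc 1 N, F d a b :=
        mul_le_mul_of_nonneg_left (sum_sum_divisors_gcd_le hF N) hH
    _ = H * (H * (∑ a ∈ Icc 1 N, ‖lam a 1‖ ^ 2 / a) * ∑ b ∈ Icc 1 N, ‖lam 1 b‖ ^ 2 / b) := by
        simp_rw [F, ← mul_sum, ← sum_mul]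
        rw [← sum_mul_sum]
    _ ≤ H * (H * (K * H) * (K * H)) :=
        mul_le_mul_of_nonneg_left
          (mul_le_mul (mul_le_mul_of_nonneg_left h1 hH) h2 hB (mul_nonneg hH (hB.trans h2))) hH
    _ = K ^ 2 * H ^ 4 := by ring

theorem div_pow_three_mul_sq_le_div_mul_div {a b X y : ℝ} (ha : 0 < a) (hb : 0 < b) (hX : 0 < X)
    (hab : X < a ^ 2 * b) (hy : 0 ≤ y) : y / (a ^ 3 * b ^ 2) ≤ y / (a * b) / X := by
  rw [div_div]
  refine div_le_div_of_nonneg_left hy (by positivity) ?_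
  calc a * b * X ≤ a * b * (a ^ 2 * b) := by gcongr
    _ = a ^ 3 * b ^ 2 := by ring

theorem sum_Icc_floor_two_mul_inv_le_rpow {X δ : ℝ} (hX : 1 ≤ X) (hδ : 0 < δ) :
    ∑ n ∈ Icc 1 ⌊2 * X⌋₊, (n : ℝ)⁻¹ ≤ (2 + 1 / δ) * X ^ δ := by
  have hN : 1 ≤ ⌊2 * X⌋₊ := Nat.one_le_floor_iff _ |>.2 (by linarith)
  have harmonic_le : ∑ n ∈ Icc 1 ⌊2 * X⌋₊, (n : ℝ)⁻¹ ≤ 1 + Real.log ⌊2 * X⌋₊ := by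
    simpa [harmonic_eq_sum_Icc] using harmonic_le_one_add_log ⌊2 * X⌋₊
  have log_le : Real.log ⌊2 * X⌋₊ ≤ Real.log 2 + Real.log X := by
    rw [← Real.log_mul two_ne_zero (by positivity)]
    exact Real.log_le_log (by exact_mod_cast hN) (Nat.floor_le (by positivity))
  have log_X_le := Real.log_le_rpow_div (by positivity : 0 ≤ X) hδ
  have one_le_rpow := Real.one_le_rpow hX hδ.le
  have log_two_lt := Real.log_two_lt_d9
  calc _ ≤ 2 + X ^ δ / δ := by linarith
    _ ≤ 2 * X ^ δ + X ^ δ / δ := by linarith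
    _ = (2 + 1 / δ) * X ^ δ := by ring

/-- Lemma `RankinSelbergBound`: if `λ(a,b)` satisfies the Hecke-type relation
`λ(a,b) = Σ_{d | (a,b)} μ(d) λ(a/d,1) λ(1,b/d)` and the Rankin–Selberg type
average bounds `Σ_{n ≤ x} |λ(n,1)|² ≤ K x` and `Σ_{n ≤ x} |λ(1,n)|² ≤ K x`,
then `Σ_{X < a²b ≤ 2X} |λ(a,b)|²/(a³b²) ≪_{ε,K} X^{-1+ε}`. -/
theorem rankin_selberg_variant
    (lam : ℕ → ℕ → ℂ) (K : ℝ)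
    (hHecke : ∀ a b : ℕ, 1 ≤ a → 1 ≤ b →
      lam a b = ∑ d ∈ (Nat.gcd a b).divisors,
        ((μ d : ℤ) : ℂ) * lam (a / d) 1 * lam 1 (b / d))
    (hbound1 : ∀ x : ℝ, 1 ≤ x →
      ∑ n ∈ Finset.Icc 1 ⌊x⌋₊, ‖lam n 1‖ ^ 2 ≤ K * x)
    (hbound2 : ∀ x : ℝ, 1 ≤ x →
      ∑ n ∈ Finset.Icc 1 ⌊x⌋₊, ‖lam 1 n‖ ^ 2 ≤ K * x) :
    ∀ ε : ℝ, 0 < ε → ∃ C : ℝ, ∀ X : ℝ, 1 ≤ X →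
      ∑ p ∈ Finset.filter
          (fun p : ℕ × ℕ => (X : ℝ) < (p.1 ^ 2 * p.2 : ℕ) ∧ ((p.1 ^ 2 * p.2 : ℕ) : ℝ) ≤ 2 * X)
          (Finset.Icc 1 ⌊2 * X⌋₊ ×ˢ Finset.Icc 1 ⌊2 * X⌋₊),
        ‖lam p.1 p.2‖ ^ 2 / ((p.1 : ℝ) ^ 3 * (p.2 : ℝ) ^ 2)
      ≤ C * X ^ (-1 + ε : ℝ) := by
  intro ε hε
  refine ⟨K ^ 2 * (2 + 1 / (ε / 4)) ^ 4, fun X hX => ?_⟩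
  have hX0 : 0 < X := by linarith
  have hbound1' : ∀ m : ℕ, 1 ≤ m → ∑ n ∈ Icc 1 m, ‖lam n 1‖ ^ 2 ≤ K * m := fun m hm => by
    simpa using hbound1 m (mod_cast hm)
  have hbound2' : ∀ m : ℕ, 1 ≤ m → ∑ n ∈ Icc 1 m, ‖lam 1 n‖ ^ 2 ≤ K * m := fun m hm => by
    simpa using hbound2 m (mod_cast hm)
  have hH := sum_Icc_floor_two_mul_inv_le_rpow hX (by positivity : 0 < ε / 4)
  calc _ ≤ ∑ p ∈ Icc 1 ⌊2 * X⌋₊ ×ˢ Icc 1 ⌊2 * X⌋₊, ‖lam p.1 p.2‖ ^ 2 / (p.1 * p.2) / X := by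
        refine sum_le_sum_of_subset_of_nonneg (filter_subset _ _) (fun _ _ _ => by positivity)
          |>.trans' (sum_le_sum fun p hp => ?_)
        obtain ⟨hp, hXp, -⟩ := mem_filter.1 hp
        obtain ⟨ha, hb⟩ := mem_product.1 hp
        push_cast at hXp
        exact div_pow_three_mul_sq_le_div_mul_div (by exact_mod_cast (mem_Icc.1 ha).1)
          (by exact_mod_cast (mem_Icc.1 hb).1) hX0 hXp (by positivity)
    _ ≤ K ^ 2 * ((2 + 1 / (ε / 4)) * X ^ (ε / 4)) ^ 4 / X := by
        rw [← sum_div, sum_product' (f := fun a b => ‖lam a b‖ ^ 2 / ((a : ℝ) * b))]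
        gcongr
        exact (sum_sq_norm_div_mul_le hHecke hbound1' hbound2' _).trans (by gcongr)
    _ = K ^ 2 * (2 + 1 / (ε / 4)) ^ 4 * X ^ (-1 + ε) := by
        rw [mul_pow, ← Real.rpow_natCast (X ^ (ε / 4)), ← Real.rpow_mul hX0.le,
          Real.rpow_add hX0, Real.rpow_neg_one]
        ring_nf
end

section
/- There is an absolute constant C such that for every real Y ≥ 1, every positive integer d, every positive integer N, and all complex numbers a_1, …, a_N: Σ_{ψ mod d} ∫_{−Y}^{Y} |Σ_{n=1}^{N} a_n ψ(n) n^{iy}|² dy ≤ C·(dY + N)·Σ_{n=1}^{N} |a_n|², where the outer sum runs over all Dirichlet characters ψ modulo d. -/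
/-!
Majorize the indicator of `[-Y, Y]` by twice the triangle function `(1 - |y| / (2Y))₊`, whose
Fourier transform is the nonnegative Fejér kernel `K(θ) = 2(1 - cos 2Yθ) / (2Yθ²)`, bounded by
both `2Y` and `2 / (Yθ²)`. Expanding the square and summing over the characters (orthogonality)
bounds the left side by the quadratic form `Σ_{m ≡ n mod d} |a_m| |a_n| d K(log m - log n)`.
By Schur's test this is at most the largest row sum times `Σ |a_n|²`; as
`|log m - log n| ≥ |m - n| / N` and the `n ≡ m` are spaced by multiples of `d`, every row sum is
`O(dY + N)`.
-/

open Finset Complex ComplexConjugate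

noncomputable def fejerKernel (L θ : ℝ) : ℝ :=
  if θ = 0 then L else 2 * (1 - Real.cos (L * θ)) / (L * θ ^ 2)

section fejerKernel

variable {L : ℝ}

theorem fejerKernel_nonneg (hL : 0 ≤ L) (θ : ℝ) : 0 ≤ fejerKernel L θ := by
  unfold fejerKernel
  split_ifs
  · exact hL
  · have := Real.cos_le_one (L * θ)
    exact div_nonneg (by linarith) (by positivity)

theorem fejerKernel_neg (θ : ℝ) : fejerKernel L (-θ) = fejerKernel L θ := by
  simp [fejerKernel, Real.cos_neg]

theorem fejerKernel_le (hL : 0 < L) (θ : ℝ) : fejerKernel L θ ≤ L := by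
  unfold fejerKernel
  split_ifs with hθ
  · exact le_rfl
  · rw [div_le_iff₀ (by positivity)]
    nlinarith [Real.one_sub_sq_div_two_le_cos (x := L * θ)]

theorem fejerKernel_le_div_sq {δ θ : ℝ} (hL : 0 < L) (hδ : 0 < δ) (hδθ : δ ≤ |θ|) :
    fejerKernel L θ ≤ 4 / (L * δ ^ 2) := by
  have hθ : θ ≠ 0 := by rintro rfl; simp at hδθ; linarith
  have hsq : δ ^ 2 ≤ θ ^ 2 := by simpa using pow_le_pow_left₀ hδ.le hδθ 2
  rw [fejerKernel, if_neg hθ, div_le_div_iff₀ (by positivity) (by positivity)]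
  have hcos : 2 * (1 - Real.cos (L * θ)) ≤ 4 := by linarith [Real.neg_one_le_cos (L * θ)]
  nlinarith [mul_le_mul_of_nonneg_left hsq hL.le,
    mul_le_mul_of_nonneg_right hcos (by positivity : 0 ≤ L * δ ^ 2)]

end fejerKernel

theorem integral_affine_mul_cexp {c : ℂ} (hc : c ≠ 0) (p q : ℂ) (a b : ℝ) :
    ∫ y in a..b, (p + q * y) * cexp (c * y) =
      ((p + q * b) / c - q / c ^ 2) * cexp (c * b)
        - ((p + q * a) / c - q / c ^ 2) * cexp (c * a) := by
  refine intervalIntegral.integral_eq_sub_of_hasDerivAt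
    (f := fun y : ℝ => ((p + q * y) / c - q / c ^ 2) * cexp (c * y)) (fun y _ => ?_)
    ((by fun_prop : Continuous fun y : ℝ => (p + q * y) * cexp (c * y)).intervalIntegrable _ _)
  have hlin : HasDerivAt (fun t : ℝ => (t : ℂ)) 1 y := ofRealCLM.hasDerivAt
  have hexp : HasDerivAt (fun t : ℝ => cexp (c * t)) (cexp (c * y) * (c * 1)) y :=
    (hlin.const_mul c).cexp
  exact (((((hlin.const_mul q).const_add p).div_const c).sub_const (q / c ^ 2)).mul
    hexp).congr_deriv (by field_simp; ring)

theorem integral_one_sub_abs_div {L : ℝ} (hL : 0 < L) : ∫ y in (-L)..L, (1 - |y| / L) = L := by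
  have hleft : ∫ y in (-L)..0, (1 - |y| / L) = ∫ y in (-L)..0, (1 + y / L) :=
    intervalIntegral.integral_congr fun y hy => by
      rw [Set.uIcc_of_le (by linarith)] at hy
      rw [abs_of_nonpos hy.2]; ring
  have hright : ∫ y in 0..L, (1 - |y| / L) = ∫ y in 0..L, (1 - y / L) :=
    intervalIntegral.integral_congr fun y hy => by
      rw [Set.uIcc_of_le hL.le] at hy
      rw [abs_of_nonneg hy.1]
  have hint : ∀ a b : ℝ, IntervalIntegrable (fun y => y / L) MeasureTheory.volume a b :=
    fun a b => (continuous_id.div_const L).intervalIntegrable a b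
  rw [← intervalIntegral.integral_add_adjacent_intervals (b := 0)
    ((by fun_prop : Continuous fun y : ℝ => 1 - |y| / L).intervalIntegrable _ _)
    ((by fun_prop : Continuous fun y : ℝ => 1 - |y| / L).intervalIntegrable _ _), hleft, hright,
    intervalIntegral.integral_add intervalIntegrable_const (hint _ _),
    intervalIntegral.integral_sub intervalIntegrable_const (hint _ _)]
  simp only [intervalIntegral.integral_const, intervalIntegral.integral_div, integral_id]
  field_simp
  ring

theorem integral_one_sub_abs_div_mul_cexp {L : ℝ} (hL : 0 < L) (θ : ℝ) :
    ∫ y in (-L)..L, ((1 - |y| / L : ℝ) : ℂ) * cexp (I * y * θ) = fejerKernel L θ := by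
  rcases eq_or_ne θ 0 with rfl | hθ
  · simp only [fejerKernel, if_pos, ofReal_zero, mul_zero, Complex.exp_zero, mul_one]
    rw [intervalIntegral.integral_ofReal, integral_one_sub_abs_div hL]
  have hc : I * θ ≠ 0 := by simp [hθ]
  have hleft : ∫ y in (-L)..0, ((1 - |y| / L : ℝ) : ℂ) * cexp (I * y * θ)
      = ∫ y in (-L)..0, (1 + (L : ℂ)⁻¹ * y) * cexp (I * θ * y) :=
    intervalIntegral.integral_congr fun y hy => by
      rw [Set.uIcc_of_le (by linarith)] at hy
      rw [abs_of_nonpos hy.2]; push_cast; ring_nf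
  have hright : ∫ y in 0..L, ((1 - |y| / L : ℝ) : ℂ) * cexp (I * y * θ)
      = ∫ y in 0..L, (1 + -(L : ℂ)⁻¹ * y) * cexp (I * θ * y) :=
    intervalIntegral.integral_congr fun y hy => by
      rw [Set.uIcc_of_le hL.le] at hy
      rw [abs_of_nonneg hy.1]; push_cast; ring_nf
  rw [← intervalIntegral.integral_add_adjacent_intervals (b := 0)
    (Continuous.intervalIntegrable (by fun_prop) _ _)
    (Continuous.intervalIntegrable (by fun_prop) _ _), hleft, hright,
    integral_affine_mul_cexp hc, integral_affine_mul_cexp hc]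
  have hcos : cexp (I * θ * L) + cexp (I * θ * -L) = 2 * cos (L * θ) := by
    rw [two_cos]; ring_nf
  have hL0 : (L : ℂ) ≠ 0 := by exact_mod_cast hL.ne'
  simp only [fejerKernel, if_neg hθ, ofReal_zero, mul_zero, Complex.exp_zero]
  push_cast
  have hI : (I * θ) ^ 2 = -(θ : ℂ) ^ 2 := by rw [mul_pow, I_sq]; ring
  have h1 : 1 + (L : ℂ)⁻¹ * -L = 0 := by field_simp; ring
  have h2 : 1 + -(L : ℂ)⁻¹ * L = 0 := by field_simp; ring
  rw [hI, h1, h2]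
  linear_combination (-1 / (L * θ ^ 2) : ℂ) * hcos

theorem ofReal_integral_one_sub_abs_div_mul_norm_sq {ι : Type*} (s : Finset ι) (b : ι → ℂ)
    (ω : ι → ℝ) {L : ℝ} (hL : 0 < L) :
    ((∫ y in (-L)..L, (1 - |y| / L) * ‖∑ n ∈ s, b n * cexp (I * y * ω n)‖ ^ 2 : ℝ) : ℂ)
      = ∑ m ∈ s, ∑ n ∈ s, b m * conj (b n) * fejerKernel L (ω m - ω n) := by
  have hpointwise : ∀ y : ℝ,
      (((1 - |y| / L) * ‖∑ n ∈ s, b n * cexp (I * y * ω n)‖ ^ 2 : ℝ) : ℂ)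
        = ∑ m ∈ s, ∑ n ∈ s, b m * conj (b n)
            * (((1 - |y| / L : ℝ) : ℂ) * cexp (I * y * (ω m - ω n : ℝ))) := by
    intro y
    rw [ofReal_mul, ofReal_pow, ← mul_conj', map_sum, sum_mul_sum, mul_sum]
    refine sum_congr rfl fun m _ => (mul_sum _ _ _).trans (sum_congr rfl fun n _ => ?_)
    rw [map_mul, ← exp_conj]
    simp only [map_mul, conj_I, conj_ofReal, ofReal_sub, mul_sub, Complex.exp_sub, neg_mul,
      Complex.exp_neg]
    field_simp
  have hcont : ∀ m n, Continuous fun y : ℝ =>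
      b m * conj (b n) * (((1 - |y| / L : ℝ) : ℂ) * cexp (I * y * (ω m - ω n : ℝ))) := by
    intro m n; fun_prop
  simp only [← intervalIntegral.integral_ofReal, hpointwise]
  rw [intervalIntegral.integral_finsetSum fun m _ =>
    (continuous_finsetSum _ fun n _ => hcont m n).intervalIntegrable _ _]
  refine sum_congr rfl fun m _ => ?_
  rw [intervalIntegral.integral_finsetSum fun n _ => (hcont m n).intervalIntegrable _ _]
  refine sum_congr rfl fun n _ => ?_
  rw [intervalIntegral.integral_const_mul, integral_one_sub_abs_div_mul_cexp hL]

theorem integral_le_two_mul_integral_one_sub_abs_div {g : ℝ → ℝ} (hg : Continuous g)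
    (hg0 : 0 ≤ g) {Y : ℝ} (hY : 0 < Y) :
    ∫ y in (-Y)..Y, g y ≤ 2 * ∫ y in (-(2 * Y))..(2 * Y), (1 - |y| / (2 * Y)) * g y := by
  have hw : ∀ y, |y| ≤ 2 * Y → 0 ≤ 2 * ((1 - |y| / (2 * Y)) * g y) := fun y hy => by
    have : |y| / (2 * Y) ≤ 1 := (div_le_one (by positivity)).2 hy
    exact mul_nonneg zero_le_two (mul_nonneg (by linarith) (hg0 y))
  rw [← intervalIntegral.integral_const_mul]
  calc ∫ y in (-Y)..Y, g y ≤ ∫ y in (-Y)..Y, 2 * ((1 - |y| / (2 * Y)) * g y) := by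
        refine intervalIntegral.integral_mono_on (by linarith) (hg.intervalIntegrable _ _)
          (Continuous.intervalIntegrable (by fun_prop) _ _) fun y hy => ?_
        have : |y| ≤ Y := abs_le.2 hy
        have : |y| / (2 * Y) ≤ 1 / 2 := by rw [div_le_iff₀ (by positivity)]; linarith
        nlinarith [mul_nonneg (by linarith : 0 ≤ 1 - 2 * (|y| / (2 * Y))) (hg0 y)]
    _ ≤ ∫ y in (-(2 * Y))..(2 * Y), 2 * ((1 - |y| / (2 * Y)) * g y) := by
        refine intervalIntegral.integral_mono_interval (by linarith) (by linarith) (by linarith)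
          ?_ (Continuous.intervalIntegrable (by fun_prop) _ _)
        refine (MeasureTheory.ae_restrict_iff' measurableSet_Ioc).2 (Filter.Eventually.of_forall
          fun y hy => hw y (abs_le.2 ⟨hy.1.le, hy.2⟩))

theorem norm_sum_dirichletCharacter_mul_conj_le {d : ℕ} [NeZero d] (m n : ZMod d) :
    ‖∑ ψ : DirichletCharacter ℂ d, ψ m * conj (ψ n)‖ ≤ if m = n then (d : ℝ) else 0 := by
  by_cases hn : IsUnit n
  · have hconj : ∀ ψ : DirichletCharacter ℂ d, ψ m * conj (ψ n) = ψ n⁻¹ * ψ m := fun ψ => by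
      rw [← RCLike.star_def, MulChar.star_apply', MulChar.inv_apply, ← hn.unit_spec,
        Ring.inverse_unit, ZMod.inv_coe_unit, mul_comm]
    simp only [hconj]
    rw [DirichletCharacter.sum_char_inv_mul_char_eq ℂ hn]
    split_ifs with h₁ h₂ h₂
    · simpa using Nat.totient_le d
    · exact absurd h₁.symm h₂
    · exact absurd h₂.symm h₁
    · simp
  · simp only [MulChar.map_nonunit _ hn, map_zero, mul_zero, sum_const_zero, norm_zero]
    split_ifs <;> positivity

theorem norm_sum_dirichletCharacter_sum_sum_le {d : ℕ} [NeZero d] (s : Finset ℕ) (a : ℕ → ℂ)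
    {k : ℕ → ℕ → ℝ} (hk : ∀ m n, 0 ≤ k m n) :
    ‖∑ ψ : DirichletCharacter ℂ d, ∑ m ∈ s, ∑ n ∈ s, a m * ψ m * conj (a n * ψ n) * k m n‖
      ≤ ∑ m ∈ s, ∑ n ∈ s, ‖a m‖ * ‖a n‖ * if (m : ZMod d) = n then d * k m n else 0 := by
  have hswap : ∑ ψ : DirichletCharacter ℂ d, ∑ m ∈ s, ∑ n ∈ s, a m * ψ m * conj (a n * ψ n) * k m n
      = ∑ m ∈ s, ∑ n ∈ s, a m * conj (a n) * k m n
          * ∑ ψ : DirichletCharacter ℂ d, ψ m * conj (ψ n) := by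
    rw [sum_comm]
    refine sum_congr rfl fun m _ => ?_
    rw [sum_comm]
    refine sum_congr rfl fun n _ => ?_
    rw [mul_sum]
    refine sum_congr rfl fun ψ _ => ?_
    rw [map_mul]; ring
  rw [hswap]
  refine (norm_sum_le _ _).trans (sum_le_sum fun m _ => (norm_sum_le _ _).trans
    (sum_le_sum fun n _ => ?_))
  have hχ := mul_le_mul_of_nonneg_left (norm_sum_dirichletCharacter_mul_conj_le (m : ZMod d) n)
    (hk m n)
  rw [norm_mul, norm_mul, norm_mul, RCLike.norm_conj, norm_real, Real.norm_of_nonneg (hk m n),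
    mul_assoc]
  refine mul_le_mul_of_nonneg_left (hχ.trans_eq ?_) (by positivity)
  split_ifs <;> ring

theorem sum_sum_mul_mul_le_of_symmetric {ι : Type*} (s : Finset ι) (x : ι → ℝ)
    {w : ι → ι → ℝ} (hw : ∀ m n, 0 ≤ w m n) (hsymm : ∀ m n, w m n = w n m) {R : ℝ}
    (hR : ∀ m ∈ s, ∑ n ∈ s, w m n ≤ R) :
    ∑ m ∈ s, ∑ n ∈ s, x m * x n * w m n ≤ R * ∑ m ∈ s, x m ^ 2 := by
  have hswap : ∑ m ∈ s, ∑ n ∈ s, x n ^ 2 * w m n = ∑ m ∈ s, ∑ n ∈ s, x m ^ 2 * w m n := by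
    rw [sum_comm]; simp only [hsymm]
  calc ∑ m ∈ s, ∑ n ∈ s, x m * x n * w m n
      ≤ ∑ m ∈ s, ∑ n ∈ s, (x m ^ 2 * w m n + x n ^ 2 * w m n) / 2 :=
        sum_le_sum fun m _ => sum_le_sum fun n _ => by
          nlinarith [mul_nonneg (sq_nonneg (x m - x n)) (hw m n)]
    _ = ∑ m ∈ s, x m ^ 2 * ∑ n ∈ s, w m n := by
        simp only [← sum_div, sum_add_distrib, hswap, mul_sum]
        ring
    _ ≤ ∑ m ∈ s, x m ^ 2 * R := sum_le_sum fun m hm => by gcongr; exact hR m hm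
    _ = R * ∑ m ∈ s, x m ^ 2 := by rw [← sum_mul, mul_comm]

theorem abs_sub_div_le_abs_log_sub_log {x y N : ℝ} (hx : 0 < x) (hy : 0 < y) (hxN : x ≤ N)
    (hyN : y ≤ N) : |x - y| / N ≤ |Real.log x - Real.log y| := by
  wlog hyx : y ≤ x generalizing x y
  · rw [abs_sub_comm, abs_sub_comm (Real.log x)]
    exact this hy hx hyN hxN (by linarith)
  have hlog := Real.one_sub_inv_le_log_of_pos (div_pos hx hy)
  rw [Real.log_div hx.ne' hy.ne', inv_div] at hlog
  rw [abs_of_nonneg (sub_nonneg.2 hyx)]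
  calc (x - y) / N ≤ (x - y) / x := div_le_div_of_nonneg_left (by linarith) hx hxN
    _ = 1 - y / x := by field_simp
    _ ≤ |Real.log x - Real.log y| := hlog.trans (le_abs_self _)

theorem sum_le_mul_sum_of_card_fiber_le {ι κ : Type*} [DecidableEq κ] {s : Finset ι}
    {t : Finset κ} {g : ι → κ} (hg : ∀ i ∈ s, g i ∈ t) {c : ℕ}
    (hc : ∀ j ∈ t, #{i ∈ s | g i = j} ≤ c) {f : ι → ℝ} {B : κ → ℝ} (hB : ∀ j ∈ t, 0 ≤ B j)
    (hf : ∀ i ∈ s, f i ≤ B (g i)) :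
    ∑ i ∈ s, f i ≤ c * ∑ j ∈ t, B j := by
  rw [← sum_fiberwise_of_maps_to hg, mul_sum]
  refine sum_le_sum fun j hj => ?_
  calc ∑ i ∈ s with g i = j, f i ≤ ∑ i ∈ s with g i = j, B j :=
        sum_le_sum fun i hi => (mem_filter.1 hi).2 ▸ hf i (mem_filter.1 hi).1
    _ = #{i ∈ s | g i = j} * B j := by rw [sum_const, nsmul_eq_mul]
    _ ≤ c * B j := by gcongr; exacts [hB j hj, hc j hj]

theorem sum_min_div_sq_le {A C t : ℝ} (hA : 0 ≤ A) (hC : 0 ≤ C) (ht : 0 < t) (M : ℕ) :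
    ∑ j ∈ Icc 1 M, min A (C / (j : ℝ) ^ 2) ≤ (t + 1) * A + 2 * C / t := by
  set K := ⌈t⌉₊
  have hK : (K : ℝ) < t + 1 := Nat.ceil_lt_add_one ht.le
  have hK' : t ≤ K := Nat.le_ceil t
  rw [← sum_filter_add_sum_filter_not _ (· ≤ K)]
  gcongr
  · calc ∑ j ∈ Icc 1 M with j ≤ K, min A (C / (j : ℝ) ^ 2) ≤ ∑ _j ∈ Icc 1 K, A := by
          refine sum_le_sum_of_subset_of_nonneg (fun j hj => ?_) (fun _ _ _ => hA) |>.trans'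
            (sum_le_sum fun j _ => min_le_left _ _)
          simp only [mem_filter, mem_Icc] at hj ⊢; omega
      _ ≤ (t + 1) * A := by simp only [sum_const, Nat.card_Icc, nsmul_eq_mul]; gcongr; exact hK.le
  · calc ∑ j ∈ Icc 1 M with ¬j ≤ K, min A (C / (j : ℝ) ^ 2)
          ≤ ∑ j ∈ Ioo K (M + 1), C * ((j : ℝ) ^ 2)⁻¹ := by
          refine sum_le_sum_of_subset_of_nonneg (fun j hj => ?_) (fun _ _ _ => by positivity)
            |>.trans' (sum_le_sum fun j _ => (min_le_right _ _).trans_eq (div_eq_mul_inv _ _))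
          simp only [mem_filter, mem_Icc, mem_Ioo] at hj ⊢; omega
      _ ≤ C * (2 / (K + 1)) := by rw [← mul_sum]; gcongr; exact_mod_cast sum_Ioo_inv_sq_le K (M + 1)
      _ ≤ 2 * C / t := by
          rw [mul_div_assoc', mul_comm C]
          gcongr
          linarith

theorem fejerKernel_log_sub_log_le {L x y N : ℝ} (hL : 0 < L) (hx : 0 < x) (hy : 0 < y)
    (hxN : x ≤ N) (hyN : y ≤ N) (hxy : x ≠ y) :
    fejerKernel L (Real.log x - Real.log y) ≤ 4 * N ^ 2 / (L * (x - y) ^ 2) := by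
  have hN : 0 < N := hx.trans_le hxN
  have hxy' : 0 < |x - y| := abs_pos.2 (sub_ne_zero.2 hxy)
  refine (fejerKernel_le_div_sq hL (by positivity)
    (abs_sub_div_le_abs_log_sub_log hx hy hxN hyN)).trans_eq ?_
  rw [div_pow, sq_abs]
  field_simp

theorem sum_erase_residueClass_le {d N m : ℕ} [NeZero d] (hm : m ≤ N) {f B : ℕ → ℝ}
    (hB : ∀ j, 0 ≤ B j) (hf : ∀ n ∈ Icc 1 N, n ≠ m → ∀ j : ℕ, |(m : ℝ) - n| = j * d → f n ≤ B j) :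
    ∑ n ∈ {n ∈ Icc 1 N | ((n : ℕ) : ZMod d) = m}.erase m, f n
      ≤ 2 * ∑ j ∈ Icc 1 (N / d), B j := by
  set g : ℕ → ℕ := fun n => Int.natAbs ((m : ℤ) - n) / d
  have hg : ∀ n ∈ {n ∈ Icc 1 N | ((n : ℕ) : ZMod d) = m}.erase m,
      Int.natAbs ((m : ℤ) - n) = g n * d ∧ n ≠ m ∧ n ∈ Icc 1 N := by
    intro n hn
    obtain ⟨hnm, hnS⟩ := mem_erase.1 hn
    obtain ⟨hnN, hcong⟩ := mem_filter.1 hnS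
    have hdvd : d ∣ Int.natAbs ((m : ℤ) - n) :=
      Int.natCast_dvd.1 (Nat.modEq_iff_dvd.1 ((ZMod.natCast_eq_natCast_iff _ _ _).1 hcong))
    exact ⟨(Nat.div_mul_cancel hdvd).symm, hnm, hnN⟩
  have hmaps : ∀ n ∈ {n ∈ Icc 1 N | ((n : ℕ) : ZMod d) = m}.erase m, g n ∈ Icc 1 (N / d) := by
    intro n hn
    obtain ⟨hgd, hnm, hnN⟩ := hg n hn
    have := mem_Icc.1 hnN
    refine mem_Icc.2 ⟨Nat.pos_of_ne_zero fun h => ?_, (Nat.le_div_iff_mul_le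
      (Nat.pos_of_neZero d)).2 (by omega)⟩
    rw [h, zero_mul] at hgd
    omega
  refine sum_le_mul_sum_of_card_fiber_le hmaps (fun j _ => ?_) (fun j _ => hB j) fun n hn => ?_
  · refine (card_le_card fun n hnj => ?_).trans (card_le_two (a := m + j * d) (b := m - j * d))
    obtain ⟨hn, rfl⟩ := mem_filter.1 hnj
    have := (hg n hn).1
    simp only [mem_insert, mem_singleton]
    omega
  · obtain ⟨hgd, hnm, hnN⟩ := hg n hn
    refine hf n hnN hnm (g n) ?_
    rw [← Nat.cast_mul, ← hgd, Nat.cast_natAbs, Int.cast_abs]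
    push_cast
    rfl

theorem sum_fejerKernel_log_sub_log_le {Y : ℝ} (hY : 0 < Y) {d N m : ℕ} [NeZero d]
    (hm : m ∈ Icc 1 N) :
    ∑ n ∈ Icc 1 N with ((n : ℕ) : ZMod d) = m, fejerKernel (2 * Y) (Real.log m - Real.log n)
      ≤ 12 * (Y + N / d) := by
  obtain ⟨hm1, hmN⟩ := mem_Icc.1 hm
  have hd : (0 : ℝ) < d := by exact_mod_cast Nat.pos_of_neZero d
  have hN : (0 : ℝ) < N := by exact_mod_cast hm1.trans hmN
  set C := 2 * (N : ℝ) ^ 2 / (Y * d ^ 2)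
  have hterm : ∀ n ∈ Icc 1 N, n ≠ m → ∀ j : ℕ, |(m : ℝ) - n| = j * d →
      fejerKernel (2 * Y) (Real.log m - Real.log n) ≤ min (2 * Y) (C / (j : ℝ) ^ 2) := by
    intro n hn hnm j hj
    obtain ⟨hn1, hnN⟩ := mem_Icc.1 hn
    refine le_min (fejerKernel_le (by positivity) _) ((fejerKernel_log_sub_log_le (N := N)
      (by positivity) (by positivity) (by positivity) (by exact_mod_cast hmN)
      (by exact_mod_cast hnN) (by exact_mod_cast Ne.symm hnm)).trans_eq ?_)
    rw [← sq_abs ((m : ℝ) - n), hj]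
    simp only [C]
    field_simp
    ring
  have hrest := (sum_erase_residueClass_le hmN (fun j => le_min (by positivity) (by positivity))
    hterm).trans (mul_le_mul_of_nonneg_left (sum_min_div_sq_le (by positivity) (by positivity)
      (by positivity : (0 : ℝ) < N / (Y * d)) (N / d)) zero_le_two)
  have hsum : (N / (Y * d) + 1) * (2 * Y) + 2 * C / (N / (Y * d)) = 2 * Y + 6 * N / d := by
    simp only [C]; field_simp; ring
  rw [hsum] at hrest
  rw [← add_sum_erase {n ∈ Icc 1 N | ((n : ℕ) : ZMod d) = m} _ (mem_filter.2 ⟨hm, rfl⟩),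
    sub_self, fejerKernel, if_pos rfl]
  calc _ ≤ 2 * Y + 2 * (2 * Y + 6 * N / d) := by gcongr
    _ ≤ 12 * (Y + N / d) := by ring_nf; linarith

theorem sum_sum_mul_mul_fejerKernel_le {Y : ℝ} (hY : 0 < Y) (d N : ℕ) [NeZero d]
    (x : ℕ → ℝ) :
    ∑ m ∈ Icc 1 N, ∑ n ∈ Icc 1 N, x m * x n *
        (if (m : ZMod d) = n then d * fejerKernel (2 * Y) (Real.log m - Real.log n) else 0)
      ≤ 12 * (d * Y + N) * ∑ m ∈ Icc 1 N, x m ^ 2 := by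
  refine sum_sum_mul_mul_le_of_symmetric _ x (fun m n => ?_) (fun m n => ?_) fun m hm => ?_
  · split_ifs
    exacts [mul_nonneg d.cast_nonneg (fejerKernel_nonneg (by positivity) _), le_rfl]
  · simp only [eq_comm (a := (m : ZMod d)), ← fejerKernel_neg (Real.log n - _), neg_sub]
  · have hd : (d : ℝ) ≠ 0 := Nat.cast_ne_zero.2 (NeZero.ne d)
    simp only [← sum_filter, eq_comm (a := (m : ZMod d)), ← mul_sum]
    exact (mul_le_mul_of_nonneg_left (sum_fejerKernel_log_sub_log_le hY hm)
      d.cast_nonneg).trans_eq (by field_simp)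

/-- Gallagher's hybrid large sieve inequality: there is an absolute constant `C`
such that for all `Y ≥ 1`, all positive moduli `d`, all `N` and all complex
coefficients `a_n`,
`Σ_{ψ mod d} ∫_{-Y}^{Y} |Σ_{n ≤ N} a_n ψ(n) n^{iy}|² dy ≤ C (dY + N) Σ_{n ≤ N} |a_n|²`. -/
theorem hybrid_large_sieve :
    ∃ C : ℝ, ∀ (Y : ℝ), 1 ≤ Y → ∀ (d : ℕ) [NeZero d], ∀ (N : ℕ) (a : ℕ → ℂ),
      ∑ ψ : DirichletCharacter ℂ d,
        ∫ y in (-Y)..Y,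
          ‖∑ n ∈ Finset.Icc 1 N,
              a n * ψ (n : ZMod d) * Complex.exp (Complex.I * y * Real.log n)‖ ^ 2
      ≤ C * ((d : ℝ) * Y + N) * ∑ n ∈ Finset.Icc 1 N, ‖a n‖ ^ 2 := by
  refine ⟨24, fun Y hY d _ N a => ?_⟩
  have hY0 : 0 < Y := by linarith
  have hexpand := fun ψ : DirichletCharacter ℂ d => ofReal_integral_one_sub_abs_div_mul_norm_sq
    (Icc 1 N) (fun n => a n * ψ n) (fun n => Real.log n) (by positivity : 0 < 2 * Y)
  calc _ ≤ ∑ ψ : DirichletCharacter ℂ d, 2 * ∫ y in (-(2 * Y))..(2 * Y), (1 - |y| / (2 * Y)) *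
          ‖∑ n ∈ Icc 1 N, a n * ψ n * cexp (I * y * Real.log n)‖ ^ 2 :=
        sum_le_sum fun ψ _ => integral_le_two_mul_integral_one_sub_abs_div (by fun_prop)
          (fun _ => by positivity) hY0
    _ ≤ 2 * ‖∑ ψ : DirichletCharacter ℂ d, ∑ m ∈ Icc 1 N, ∑ n ∈ Icc 1 N,
          a m * ψ m * conj (a n * ψ n) * fejerKernel (2 * Y) (Real.log m - Real.log n)‖ := by
        rw [← mul_sum]
        gcongr
        refine (le_abs_self _).trans_eq ?_
        rw [← Real.norm_eq_abs, ← norm_real, ofReal_sum]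
        simp only [hexpand]
    _ ≤ 2 * ∑ m ∈ Icc 1 N, ∑ n ∈ Icc 1 N, ‖a m‖ * ‖a n‖ *
          (if (m : ZMod d) = n then d * fejerKernel (2 * Y) (Real.log m - Real.log n) else 0) := by
        gcongr
        exact norm_sum_dirichletCharacter_sum_sum_le _ _ fun _ _ =>
          fejerKernel_nonneg (by positivity) _
    _ ≤ 2 * (12 * (d * Y + N) * ∑ n ∈ Icc 1 N, ‖a n‖ ^ 2) := by
        gcongr
        exact sum_sum_mul_mul_fejerKernel_le hY0 d N _
    _ = 24 * (d * Y + N) * ∑ n ∈ Icc 1 N, ‖a n‖ ^ 2 := by ring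
end

section
/- For every ε > 0 there is a constant C_ε such that for every positive integer q and every real X ≥ 1: Σ_{n ≤ X} rad(nq)^{−1/2} ≤ C_ε · rad(q)^{−1/2} · X^{1/2} · (qX)^ε, where the sum is over positive integers n ≤ X. -/
def rad (n : ℕ) : ℕ := ∏ p ∈ n.primeFactors, p

/-!
Since `rad n * rad q ≤ gcd(n, q) * rad (n * q)`, grouping `n` by `d = gcd(n, q)` and writing
`n = d * m` bounds the sum by `rad(q)^(-1/2) * ∑_{d ∣ q} d^(1/2) * ∑_{m ≤ X/d} rad(m)^(-1/2)`.
For the inner sum over `m ≤ M`, group `m` by `r = rad m` and write `m = r * t`, where every prime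
factor of `t` divides `r`. Then `r^(-1/2) ≤ M^(1/2) * r⁻¹ * t^(-1/2)`, the sum over such `t` is at
most the Euler product `∏_{p ∣ r} (1 - p^(-1/2))⁻¹ = O(r^δ)`, and `∑_{r ≤ M} r⁻¹ = O(M^δ)`, so the
inner sum is `O(M^(1/2 + 2δ))`. Finally `∑_{d ∣ q} d^(-δ) ≤ ∏_{p ∣ q} (1 - p^(-δ))⁻¹ = O(q^δ)`.
-/

open Finset Real

lemma rad_pos (n : ℕ) : 0 < rad n :=
  prod_pos fun _ hp => (Nat.prime_of_mem_primeFactors hp).pos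

lemma rad_dvd_self (n : ℕ) : rad n ∣ n := Nat.prod_primeFactors_dvd n

lemma rad_le_self {n : ℕ} (hn : n ≠ 0) : rad n ≤ n :=
  Nat.le_of_dvd (Nat.pos_of_ne_zero hn) (rad_dvd_self n)

lemma rad_le_rad_of_dvd {m n : ℕ} (hn : n ≠ 0) (h : m ∣ n) : rad m ≤ rad n :=
  Nat.le_of_dvd (rad_pos n) <| prod_dvd_prod_of_subset _ _ _ (Nat.primeFactors_mono h hn)

lemma primeFactors_rad (n : ℕ) : (rad n).primeFactors = n.primeFactors :=
  Nat.primeFactors_prod fun _ hp => Nat.prime_of_mem_primeFactors hp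

lemma rad_mul_rad_le_gcd_mul_rad_mul {m n : ℕ} (hn : n ≠ 0) :
    rad m * rad n ≤ m.gcd n * rad (m * n) := by
  calc rad m * rad n = rad (m.gcd n) * rad (m * n) :=
        (Nat.prod_primeFactors_gcd_mul_prod_primeFactors_mul m n fun p => p).symm
    _ ≤ m.gcd n * rad (m * n) := Nat.mul_le_mul_right _ (rad_le_self (Nat.gcd_ne_zero_right hn))

lemma rad_mul_rpow_neg_le {θ : ℝ} (hθ : 0 ≤ θ) (m : ℕ) {n : ℕ} (hn : n ≠ 0) :
    (rad (m * n) : ℝ) ^ (-θ) ≤ (rad n : ℝ) ^ (-θ) * ((m.gcd n : ℝ) ^ θ * (rad m : ℝ) ^ (-θ)) := by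
  have hg : (0 : ℝ) < m.gcd n := by exact_mod_cast Nat.pos_of_ne_zero (Nat.gcd_ne_zero_right hn)
  have hm : (0 : ℝ) < rad m := by exact_mod_cast rad_pos m
  have hn' : (0 : ℝ) < rad n := by exact_mod_cast rad_pos n
  have hle : (rad m : ℝ) * rad n / m.gcd n ≤ rad (m * n) := by
    rw [div_le_iff₀' hg]; exact_mod_cast rad_mul_rad_le_gcd_mul_rad_mul hn
  calc (rad (m * n) : ℝ) ^ (-θ) ≤ ((rad m : ℝ) * rad n / m.gcd n) ^ (-θ) :=
        rpow_le_rpow_of_nonpos (by positivity) hle (by linarith)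
    _ = (rad n : ℝ) ^ (-θ) * ((m.gcd n : ℝ) ^ θ * (rad m : ℝ) ^ (-θ)) := by
        rw [div_rpow (by positivity) hg.le, mul_rpow hm.le hn'.le, rpow_neg hg.le, div_inv_eq_mul]
        ring

lemma Nat.mem_factoredNumbers_primeFactors_of_dvd {d n : ℕ} (hn : n ≠ 0) (h : d ∣ n) :
    d ∈ Nat.factoredNumbers n.primeFactors :=
  Nat.mem_factoredNumbers_of_dvd (Nat.mem_factoredNumbers_of_primeFactors_subset hn subset_rfl) h

lemma sum_rpow_neg_le_prod_primeFactors {θ : ℝ} (hθ : 0 < θ) {n : ℕ} {S : Finset ℕ}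
    (hS : ∀ t ∈ S, t ∈ Nat.factoredNumbers n.primeFactors) :
    ∑ t ∈ S, (t : ℝ) ^ (-θ) ≤ ∏ p ∈ n.primeFactors, (1 - (p : ℝ) ^ (-θ))⁻¹ := by
  classical
  let f : ℕ →* ℝ :=
    { toFun := fun t => (t : ℝ) ^ (-θ)
      map_one' := by simp
      map_mul' := fun a b => by push_cast; exact mul_rpow (Nat.cast_nonneg a) (Nat.cast_nonneg b) }
  have hf : ∀ {p : ℕ}, p.Prime → ‖f p‖ < 1 := fun {p} hp => by
    show ‖(p : ℝ) ^ (-θ)‖ < 1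
    rw [Real.norm_of_nonneg (rpow_nonneg (Nat.cast_nonneg p) _)]
    exact rpow_lt_one_of_one_lt_of_neg (by exact_mod_cast hp.one_lt) (neg_lt_zero.mpr hθ)
  have hsum := (EulerProduct.summable_and_hasSum_factoredNumbers_prod_filter_prime_geometric
    hf n.primeFactors).2
  rw [filter_true_of_mem fun p hp => Nat.prime_of_mem_primeFactors hp] at hsum
  rw [← sum_subtype_of_mem _ hS]
  exact sum_le_hasSum _ (fun t _ => rpow_nonneg (Nat.cast_nonneg _) _) hsum

lemma prod_primeFactors_le_pow_mul_rpow {f : ℕ → ℝ} {M δ : ℝ} {B : ℕ} (hδ : 0 ≤ δ)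
    (hf1 : ∀ p, p.Prime → 1 ≤ f p) (hfM : ∀ p, p.Prime → f p ≤ M)
    (hfB : ∀ p, p.Prime → B ≤ p → f p ≤ (p : ℝ) ^ δ) {q : ℕ} (hq : q ≠ 0) :
    ∏ p ∈ q.primeFactors, f p ≤ M ^ B * (q : ℝ) ^ δ := by
  have hM : 1 ≤ M := (hf1 2 Nat.prime_two).trans (hfM 2 Nat.prime_two)
  have hpoint : ∀ p ∈ q.primeFactors, f p ≤ (if p < B then M else 1) * (p : ℝ) ^ δ := by
    intro p hp
    have hp := Nat.prime_of_mem_primeFactors hp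
    split_ifs with hpB
    · exact (hfM p hp).trans
        (le_mul_of_one_le_right (by linarith) (one_le_rpow (by exact_mod_cast hp.one_le) hδ))
    · rw [one_mul]; exact hfB p hp (not_lt.mp hpB)
  have hsmall : ∏ p ∈ q.primeFactors, (if p < B then M else 1) ≤ M ^ B := by
    rw [prod_ite, prod_const, prod_const_one, mul_one]
    refine pow_le_pow_right₀ hM ((card_le_card fun p hp => ?_).trans (card_range B).le)
    exact mem_range.mpr (mem_filter.mp hp).2
  have hlarge : ∏ p ∈ q.primeFactors, (p : ℝ) ^ δ ≤ (q : ℝ) ^ δ := by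
    rw [finsetProd_rpow _ _ (fun p _ => Nat.cast_nonneg p)]
    refine rpow_le_rpow (by positivity) ?_ hδ
    rw [← Nat.cast_prod]
    exact_mod_cast Nat.le_of_dvd (Nat.pos_of_ne_zero hq) (Nat.prod_primeFactors_dvd q)
  calc ∏ p ∈ q.primeFactors, f p
      ≤ ∏ p ∈ q.primeFactors, (if p < B then M else 1) * (p : ℝ) ^ δ :=
        prod_le_prod (fun p hp => by linarith [hf1 p (Nat.prime_of_mem_primeFactors hp)]) hpoint
    _ ≤ M ^ B * (q : ℝ) ^ δ := by
        rw [prod_mul_distrib]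
        exact mul_le_mul hsmall hlarge (prod_nonneg fun p _ => by positivity) (by positivity)

lemma exists_prod_primeFactors_inv_one_sub_rpow_neg_le {θ δ : ℝ} (hθ : 0 < θ) (hδ : 0 < δ) :
    ∃ C, 0 ≤ C ∧ ∀ q : ℕ, q ≠ 0 →
      ∏ p ∈ q.primeFactors, (1 - (p : ℝ) ^ (-θ))⁻¹ ≤ C * (q : ℝ) ^ δ := by
  -- Every factor is at most `M = (1 - 2^(-θ))⁻¹`, and at most `p ^ δ` once `p ≥ M ^ δ⁻¹`.
  set M := (1 - (2 : ℝ) ^ (-θ))⁻¹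
  have h2 : (2 : ℝ) ^ (-θ) < 1 := rpow_lt_one_of_one_lt_of_neg one_lt_two (neg_lt_zero.mpr hθ)
  have hp2 : ∀ p : ℕ, p.Prime → 0 ≤ (p : ℝ) ^ (-θ) ∧ (p : ℝ) ^ (-θ) ≤ (2 : ℝ) ^ (-θ) :=
    fun p hp => ⟨by positivity,
      rpow_le_rpow_of_nonpos two_pos (by exact_mod_cast hp.two_le) (neg_nonpos.mpr hθ.le)⟩
  have hfM : ∀ p : ℕ, p.Prime → (1 - (p : ℝ) ^ (-θ))⁻¹ ≤ M := fun p hp =>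
    inv_anti₀ (by linarith) (by linarith [hp2 p hp])
  have hM : 0 ≤ M := inv_nonneg.mpr (by linarith)
  refine ⟨M ^ ⌈M ^ δ⁻¹⌉₊, by positivity, fun q hq => ?_⟩
  refine prod_primeFactors_le_pow_mul_rpow hδ.le (fun p hp => ?_) hfM (fun p hp hpB => ?_) hq
  · obtain ⟨h0, h1⟩ := hp2 p hp
    exact one_le_inv₀ (by linarith) |>.mpr (by linarith)
  · calc (1 - (p : ℝ) ^ (-θ))⁻¹ ≤ M := hfM p hp
      _ = (M ^ δ⁻¹) ^ δ := by rw [← rpow_mul hM, inv_mul_cancel₀ hδ.ne', rpow_one]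
      _ ≤ (p : ℝ) ^ δ :=
        rpow_le_rpow (by positivity) ((Nat.le_ceil _).trans (by exact_mod_cast hpB)) hδ.le

lemma exists_sum_rpow_neg_le_of_factoredNumbers {θ δ : ℝ} (hθ : 0 < θ) (hδ : 0 < δ) :
    ∃ C, 0 ≤ C ∧ ∀ n : ℕ, n ≠ 0 → ∀ S : Finset ℕ,
      (∀ t ∈ S, t ∈ Nat.factoredNumbers n.primeFactors) →
        ∑ t ∈ S, (t : ℝ) ^ (-θ) ≤ C * (n : ℝ) ^ δ := by
  obtain ⟨C, hC0, hC⟩ := exists_prod_primeFactors_inv_one_sub_rpow_neg_le hθ hδ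
  exact ⟨C, hC0, fun n hn S hS => (sum_rpow_neg_le_prod_primeFactors hθ hS).trans (hC n hn)⟩

lemma sum_Icc_inv_le_rpow {δ : ℝ} (hδ : 0 < δ) (M : ℕ) :
    ∑ r ∈ Icc 1 M, (r : ℝ)⁻¹ ≤ (1 + δ⁻¹) * (M : ℝ) ^ δ := by
  rcases M.eq_zero_or_pos with rfl | hM
  · simp [zero_rpow hδ.ne']
  have hM1 : (1 : ℝ) ≤ M := by exact_mod_cast hM
  have hharmonic : ∑ r ∈ Icc 1 M, (r : ℝ)⁻¹ ≤ 1 + log M := by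
    have h := harmonic_le_one_add_log M
    rw [harmonic_eq_sum_Icc] at h
    push_cast at h
    exact h
  have hlog : log M ≤ (M : ℝ) ^ δ / δ := log_le_rpow_div (by positivity) hδ
  have hpow : 1 ≤ (M : ℝ) ^ δ := one_le_rpow hM1 hδ.le
  calc ∑ r ∈ Icc 1 M, (r : ℝ)⁻¹ ≤ 1 + (M : ℝ) ^ δ / δ := hharmonic.trans (by linarith)
    _ ≤ (1 + δ⁻¹) * (M : ℝ) ^ δ := by rw [add_mul, one_mul, div_eq_inv_mul]; linarith

lemma rpow_neg_le_of_mul_le {θ x y M : ℝ} (hθ : θ ≤ 1) (hx : 0 < x) (hy : 0 < y)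
    (h : x * y ≤ M) : x ^ (-θ) ≤ M ^ (1 - θ) * x⁻¹ * y ^ (-(1 - θ)) := by
  have hxM : x ≤ M / y := (le_div_iff₀ hy).mpr h
  calc x ^ (-θ) = x⁻¹ * x ^ (1 - θ) := by
        rw [rpow_sub hx, rpow_one, rpow_neg hx.le]; field_simp
    _ ≤ x⁻¹ * (M / y) ^ (1 - θ) := by gcongr
    _ = M ^ (1 - θ) * x⁻¹ * y ^ (-(1 - θ)) := by
        rw [div_rpow (by nlinarith) hy.le, rpow_neg hy.le]
        ring

lemma sum_filter_rad_eq_rpow_neg_le {θ δ C : ℝ} (hθ : θ ≤ 1) (M : ℕ) {r : ℕ} (hr : r ≠ 0)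
    (hC : ∀ S : Finset ℕ, (∀ t ∈ S, t ∈ Nat.factoredNumbers r.primeFactors) →
      ∑ t ∈ S, (t : ℝ) ^ (-(1 - θ)) ≤ C * (r : ℝ) ^ δ) :
    ∑ m ∈ Icc 1 M with rad m = r, (rad m : ℝ) ^ (-θ)
      ≤ (M : ℝ) ^ (1 - θ) * (r : ℝ)⁻¹ * (C * (r : ℝ) ^ δ) := by
  set F := {m ∈ Icc 1 M | rad m = r}
  have hF : ∀ m ∈ F, m ≠ 0 ∧ m ≤ M ∧ rad m = r := fun m hm => by
    simp only [F, mem_filter, mem_Icc] at hm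
    exact ⟨by omega, hm.1.2, hm.2⟩
  have hdvd : ∀ m ∈ F, r ∣ m := fun m hm => (hF m hm).2.2 ▸ rad_dvd_self m
  have hpoint : ∀ m ∈ F,
      (rad m : ℝ) ^ (-θ) ≤ (M : ℝ) ^ (1 - θ) * (r : ℝ)⁻¹ * ((m / r : ℕ) : ℝ) ^ (-(1 - θ)) := by
    intro m hm
    obtain ⟨hm0, hmM, hrad⟩ := hF m hm
    have hmr : r * (m / r) = m := Nat.mul_div_cancel' (hdvd m hm)
    rw [hrad]
    refine rpow_neg_le_of_mul_le hθ (by positivity) ?_ ?_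
    · exact_mod_cast Nat.pos_of_ne_zero fun h => hm0 (by rw [← hmr, h, mul_zero])
    · exact_mod_cast hmr ▸ hmM
  have hfactored : ∀ t ∈ F.image (· / r), t ∈ Nat.factoredNumbers r.primeFactors := by
    simp only [mem_image]
    rintro t ⟨m, hm, rfl⟩
    obtain ⟨hm0, -, hrad⟩ := hF m hm
    rw [← hrad, primeFactors_rad]
    exact Nat.mem_factoredNumbers_primeFactors_of_dvd hm0 (Nat.div_dvd_of_dvd (rad_dvd_self m))
  calc ∑ m ∈ F, (rad m : ℝ) ^ (-θ)
      ≤ ∑ m ∈ F, (M : ℝ) ^ (1 - θ) * (r : ℝ)⁻¹ * ((m / r : ℕ) : ℝ) ^ (-(1 - θ)) :=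
        sum_le_sum hpoint
    _ = (M : ℝ) ^ (1 - θ) * (r : ℝ)⁻¹ * ∑ t ∈ F.image (· / r), (t : ℝ) ^ (-(1 - θ)) := by
        rw [mul_sum, sum_image fun m hm m' hm' => (Nat.div_left_inj (hdvd m hm) (hdvd m' hm')).mp]
    _ ≤ (M : ℝ) ^ (1 - θ) * (r : ℝ)⁻¹ * (C * (r : ℝ) ^ δ) := by
        gcongr
        exact hC _ hfactored

lemma exists_sum_rad_rpow_neg_le {θ δ : ℝ} (hθ : θ < 1) (hδ : 0 < δ) :
    ∃ C, 0 ≤ C ∧ ∀ M : ℕ, ∑ m ∈ Icc 1 M, (rad m : ℝ) ^ (-θ) ≤ C * (M : ℝ) ^ (1 - θ + δ) := by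
  obtain ⟨C, hC0, hC⟩ :=
    exists_sum_rpow_neg_le_of_factoredNumbers (sub_pos.mpr hθ) (half_pos hδ)
  refine ⟨C * (1 + (δ / 2)⁻¹), by positivity, fun M => ?_⟩
  have hmaps : ∀ m ∈ Icc 1 M, rad m ∈ Icc 1 M := fun m hm => by
    rw [mem_Icc] at hm ⊢
    exact ⟨rad_pos m, (rad_le_self (by omega)).trans hm.2⟩
  calc ∑ m ∈ Icc 1 M, (rad m : ℝ) ^ (-θ)
      = ∑ r ∈ Icc 1 M, ∑ m ∈ Icc 1 M with rad m = r, (rad m : ℝ) ^ (-θ) :=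
        (sum_fiberwise_of_maps_to hmaps _).symm
    _ ≤ ∑ r ∈ Icc 1 M, (M : ℝ) ^ (1 - θ) * (r : ℝ)⁻¹ * (C * (M : ℝ) ^ (δ / 2)) := by
        refine sum_le_sum fun r hr => ?_
        have hr1 : 1 ≤ r := (mem_Icc.mp hr).1
        refine (sum_filter_rad_eq_rpow_neg_le hθ.le M (by omega) (hC r (by omega))).trans ?_
        gcongr
        exact_mod_cast (mem_Icc.mp hr).2
    _ = C * (M : ℝ) ^ (1 - θ) * (M : ℝ) ^ (δ / 2) * ∑ r ∈ Icc 1 M, (r : ℝ)⁻¹ := by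
        rw [mul_sum]; exact sum_congr rfl fun r _ => by ring
    _ ≤ C * (M : ℝ) ^ (1 - θ) * (M : ℝ) ^ (δ / 2) * ((1 + (δ / 2)⁻¹) * (M : ℝ) ^ (δ / 2)) := by
        gcongr
        exact sum_Icc_inv_le_rpow (half_pos hδ) M
    _ = C * (1 + (δ / 2)⁻¹) * (M : ℝ) ^ (1 - θ + δ) := by
        rw [show 1 - θ + δ = 1 - θ + δ / 2 + δ / 2 by ring,
          rpow_add' (Nat.cast_nonneg M) (by linarith), rpow_add' (Nat.cast_nonneg M) (by linarith)]
        ring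

lemma sum_filter_dvd_rad_rpow_neg_le {θ : ℝ} (hθ : 0 ≤ θ) (N : ℕ) {d : ℕ} (hd : d ≠ 0) :
    ∑ n ∈ Icc 1 N with d ∣ n, (rad n : ℝ) ^ (-θ) ≤ ∑ m ∈ Icc 1 (N / d), (rad m : ℝ) ^ (-θ) := by
  have hsub : {n ∈ Icc 1 N | d ∣ n} ⊆ (Icc 1 (N / d)).image (d * ·) := by
    intro n hn
    simp only [mem_filter, mem_Icc] at hn
    obtain ⟨⟨hn1, hnN⟩, m, rfl⟩ := hn
    refine mem_image.mpr ⟨m, mem_Icc.mpr ⟨?_, ?_⟩, rfl⟩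
    · exact Nat.pos_of_ne_zero fun h => by simp [h] at hn1
    · exact (Nat.le_div_iff_mul_le (Nat.pos_of_ne_zero hd)).mpr (by linarith)
  calc ∑ n ∈ Icc 1 N with d ∣ n, (rad n : ℝ) ^ (-θ)
      ≤ ∑ n ∈ (Icc 1 (N / d)).image (d * ·), (rad n : ℝ) ^ (-θ) :=
        sum_le_sum_of_subset_of_nonneg hsub fun _ _ _ => by positivity
    _ = ∑ m ∈ Icc 1 (N / d), (rad (d * m) : ℝ) ^ (-θ) :=
        sum_image fun _ _ _ _ h => mul_left_cancel₀ hd h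
    _ ≤ ∑ m ∈ Icc 1 (N / d), (rad m : ℝ) ^ (-θ) := by
        refine sum_le_sum fun m hm => rpow_le_rpow_of_nonpos ?_ ?_ (neg_nonpos.mpr hθ)
        · exact_mod_cast rad_pos m
        · have hm0 : m ≠ 0 := by have := (mem_Icc.mp hm).1; omega
          exact_mod_cast rad_le_rad_of_dvd (mul_ne_zero hd hm0) (dvd_mul_left m d)

lemma sum_rad_mul_rpow_neg_le_sum_divisors {θ : ℝ} (hθ : 0 ≤ θ) (N : ℕ) {q : ℕ} (hq : q ≠ 0) :
    ∑ n ∈ Icc 1 N, (rad (n * q) : ℝ) ^ (-θ)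
      ≤ (rad q : ℝ) ^ (-θ) *
        ∑ d ∈ q.divisors, (d : ℝ) ^ θ * ∑ m ∈ Icc 1 (N / d), (rad m : ℝ) ^ (-θ) := by
  have hmaps : ∀ n ∈ Icc 1 N, n.gcd q ∈ q.divisors := fun n _ =>
    Nat.mem_divisors.mpr ⟨Nat.gcd_dvd_right n q, hq⟩
  calc ∑ n ∈ Icc 1 N, (rad (n * q) : ℝ) ^ (-θ)
      ≤ ∑ n ∈ Icc 1 N, (rad q : ℝ) ^ (-θ) * ((n.gcd q : ℝ) ^ θ * (rad n : ℝ) ^ (-θ)) :=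
        sum_le_sum fun n _ => rad_mul_rpow_neg_le hθ n hq
    _ = (rad q : ℝ) ^ (-θ) * ∑ d ∈ q.divisors,
          (d : ℝ) ^ θ * ∑ n ∈ Icc 1 N with n.gcd q = d, (rad n : ℝ) ^ (-θ) := by
        rw [← mul_sum, ← sum_fiberwise_of_maps_to hmaps]
        refine congrArg _ (sum_congr rfl fun d _ => ?_)
        rw [mul_sum]
        exact sum_congr rfl fun n hn => by rw [(mem_filter.mp hn).2]
    _ ≤ (rad q : ℝ) ^ (-θ) * ∑ d ∈ q.divisors,
          (d : ℝ) ^ θ * ∑ n ∈ Icc 1 N with d ∣ n, (rad n : ℝ) ^ (-θ) := by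
        gcongr _ * ∑ d ∈ _, _ * ?_ with d
        refine sum_le_sum_of_subset_of_nonneg (fun n hn => ?_) fun _ _ _ => by positivity
        rw [mem_filter] at hn ⊢
        exact ⟨hn.1, hn.2 ▸ Nat.gcd_dvd_left n q⟩
    _ ≤ (rad q : ℝ) ^ (-θ) * ∑ d ∈ q.divisors,
          (d : ℝ) ^ θ * ∑ m ∈ Icc 1 (N / d), (rad m : ℝ) ^ (-θ) := by
        gcongr _ * ∑ d ∈ _, _ * ?_ with d hd
        exact sum_filter_dvd_rad_rpow_neg_le hθ N (Nat.ne_of_gt (Nat.pos_of_mem_divisors hd))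

lemma sum_rad_mul_rpow_neg_le_of_sum_rad_le {θ s C X : ℝ} (hθ : 0 ≤ θ) (hC : 0 ≤ C) (hs : 0 ≤ s)
    (hX : 0 ≤ X) (hrad : ∀ M : ℕ, ∑ m ∈ Icc 1 M, (rad m : ℝ) ^ (-θ) ≤ C * (M : ℝ) ^ s)
    {q : ℕ} (hq : q ≠ 0) :
    ∑ n ∈ Icc 1 ⌊X⌋₊, (rad (n * q) : ℝ) ^ (-θ)
      ≤ C * (rad q : ℝ) ^ (-θ) * X ^ s * ∑ d ∈ q.divisors, (d : ℝ) ^ (θ - s) := by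
  have hinner : ∀ d ∈ q.divisors,
      (d : ℝ) ^ θ * ∑ m ∈ Icc 1 (⌊X⌋₊ / d), (rad m : ℝ) ^ (-θ) ≤ C * X ^ s * (d : ℝ) ^ (θ - s) := by
    intro d hd
    have hd0 : (0 : ℝ) < d := by exact_mod_cast Nat.pos_of_mem_divisors hd
    have hfloor : ((⌊X⌋₊ / d : ℕ) : ℝ) ≤ X / d :=
      Nat.cast_div_le.trans (div_le_div_of_nonneg_right (Nat.floor_le hX) hd0.le)
    calc (d : ℝ) ^ θ * ∑ m ∈ Icc 1 (⌊X⌋₊ / d), (rad m : ℝ) ^ (-θ)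
        ≤ (d : ℝ) ^ θ * (C * (X / d) ^ s) := by
          gcongr
          exact (hrad _).trans (by gcongr)
      _ = C * X ^ s * (d : ℝ) ^ (θ - s) := by
          rw [div_rpow hX hd0.le, rpow_sub hd0]
          ring
  calc ∑ n ∈ Icc 1 ⌊X⌋₊, (rad (n * q) : ℝ) ^ (-θ)
      ≤ (rad q : ℝ) ^ (-θ) *
          ∑ d ∈ q.divisors, (d : ℝ) ^ θ * ∑ m ∈ Icc 1 (⌊X⌋₊ / d), (rad m : ℝ) ^ (-θ) :=
        sum_rad_mul_rpow_neg_le_sum_divisors hθ _ hq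
    _ ≤ (rad q : ℝ) ^ (-θ) * ∑ d ∈ q.divisors, C * X ^ s * (d : ℝ) ^ (θ - s) :=
        mul_le_mul_of_nonneg_left (sum_le_sum hinner) (by positivity)
    _ = C * (rad q : ℝ) ^ (-θ) * X ^ s * ∑ d ∈ q.divisors, (d : ℝ) ^ (θ - s) := by
        rw [← mul_sum]; ring

/-- Lemma `radicalsum`: for every `ε > 0` there is a constant `C_ε` such that
for every `q ≥ 1` and `X ≥ 1`,
`Σ_{n ≤ X} rad(nq)^{-1/2} ≤ C_ε · rad(q)^{-1/2} · X^{1/2} · (qX)^ε`. -/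
theorem radical_sum_bound :
    ∀ ε : ℝ, 0 < ε → ∃ C : ℝ, ∀ q : ℕ, 0 < q → ∀ X : ℝ, 1 ≤ X →
      ∑ n ∈ Finset.Icc 1 ⌊X⌋₊, ((rad (n * q) : ℝ)) ^ (-(1 : ℝ) / 2)
        ≤ C * ((rad q : ℝ)) ^ (-(1 : ℝ) / 2) * X ^ ((1 : ℝ) / 2) * ((q : ℝ) * X) ^ ε := by
  intro ε hε
  obtain ⟨C₁, hC₁, hrad⟩ := exists_sum_rad_rpow_neg_le (θ := 1 / 2) (by norm_num) (half_pos hε)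
  obtain ⟨C₂, hC₂, hfactored⟩ :=
    exists_sum_rpow_neg_le_of_factoredNumbers (half_pos hε) (half_pos hε)
  refine ⟨C₁ * C₂, fun q hq X hX => ?_⟩
  have hX0 : 0 ≤ X := by linarith
  have hdivisors : ∑ d ∈ q.divisors, (d : ℝ) ^ (1 / 2 - (1 - 1 / 2 + ε / 2) : ℝ)
      ≤ C₂ * (q : ℝ) ^ (ε / 2) := by
    rw [show (1 / 2 - (1 - 1 / 2 + ε / 2) : ℝ) = -(ε / 2) by ring]
    exact hfactored q hq.ne' _ fun d hd =>
      Nat.mem_factoredNumbers_primeFactors_of_dvd hq.ne' (Nat.dvd_of_mem_divisors hd)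
  have hqX : 1 ≤ (q : ℝ) * X := one_le_mul_of_one_le_of_one_le (by exact_mod_cast hq) hX
  rw [neg_div]
  calc ∑ n ∈ Icc 1 ⌊X⌋₊, (rad (n * q) : ℝ) ^ (-(1 / 2 : ℝ))
      ≤ C₁ * (rad q : ℝ) ^ (-(1 / 2 : ℝ)) * X ^ (1 - 1 / 2 + ε / 2 : ℝ) *
          ∑ d ∈ q.divisors, (d : ℝ) ^ (1 / 2 - (1 - 1 / 2 + ε / 2) : ℝ) :=
        sum_rad_mul_rpow_neg_le_of_sum_rad_le (by norm_num) hC₁ (by linarith) hX0 hrad hq.ne'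
    _ ≤ C₁ * (rad q : ℝ) ^ (-(1 / 2 : ℝ)) * X ^ (1 - 1 / 2 + ε / 2 : ℝ) *
          (C₂ * (q : ℝ) ^ (ε / 2)) := by gcongr
    _ = C₁ * C₂ * (rad q : ℝ) ^ (-(1 / 2 : ℝ)) * X ^ (1 / 2 : ℝ) * ((q : ℝ) * X) ^ (ε / 2) := by
        rw [mul_rpow (Nat.cast_nonneg q) hX0, show (1 - 1 / 2 + ε / 2 : ℝ) = 1 / 2 + ε / 2 by ring,
          rpow_add' hX0 (by linarith)]
        ring
    _ ≤ C₁ * C₂ * (rad q : ℝ) ^ (-(1 / 2 : ℝ)) * X ^ (1 / 2 : ℝ) * ((q : ℝ) * X) ^ ε := by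
        gcongr
        linarith
end

section
/- Let b₁, b₂ be positive integers and k an integer with gcd(k, b₁b₂) = 1. Then Ŝ(b₁,b₂,k,0) = φ(b₁) if b₁ = b₂, and Ŝ(b₁,b₂,k,0) = 0 if b₁ ≠ b₂, where φ is Euler's totient function. -/
/-- `Ŝ(b₁,b₂,k,n'') = (b₁b₂)⁻¹ Σ_{x mod b₁b₂} S(k̄₁,x;b₁) S(k̄₂,x;b₂) e_{b₁b₂}(x n'')`,
where `k̄ᵢ` is the inverse of `k` modulo `bᵢ`. -/
noncomputable def Shat (b₁ b₂ : ℕ) (k n'' : ℤ) : ℂ :=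
  (1 / ((b₁ : ℂ) * (b₂ : ℂ))) *
    ∑ x ∈ Finset.range (b₁ * b₂),
      Kl (((((k : ZMod b₁)⁻¹).val : ℕ) : ℤ)) (x : ℤ) b₁ *
        Kl (((((k : ZMod b₂)⁻¹).val : ℕ) : ℤ)) (x : ℤ) b₂ *
        eadd (b₁ * b₂) ((x : ℤ) * n'')

/-! Opening both Kloosterman sums and summing over `x` first, orthogonality of the additive
characters modulo `b₁b₂` keeps only the pairs `(t₁, t₂)` of reduced residues with
`t̄₁ b₂ + t̄₂ b₁ ≡ 0 (mod b₁b₂)`. As `t̄ᵢ` is prime to `bᵢ`, this forces `b₁ ∣ b₂` and `b₂ ∣ b₁`,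
so the sum vanishes unless `b₁ = b₂ = b`. Then the condition reads `t₂ ≡ -t₁ (mod b)`, the phases
`e_b(k̄ t₁) e_b(k̄ t₂)` cancel, and each of the `φ(b)` residues `t₁` has exactly one partner. -/

open Finset

lemma eadd_eq_zpow (c : ℕ) (a : ℤ) : eadd c a = Complex.exp (2 * Real.pi * Complex.I / c) ^ a := by
  rw [eadd, ← Complex.exp_int_mul]
  ring_nf

lemma eadd_add (c : ℕ) (x y : ℤ) : eadd c (x + y) = eadd c x * eadd c y := by
  simp only [eadd_eq_zpow, zpow_add₀ (Complex.exp_ne_zero _)]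

lemma eadd_eq_one_iff {c : ℕ} (hc : 0 < c) (a : ℤ) : eadd c a = 1 ↔ (c : ℤ) ∣ a := by
  rw [eadd_eq_zpow]
  exact (Complex.isPrimitiveRoot_exp c hc.ne').zpow_eq_one_iff_dvd a

lemma eadd_zero (c : ℕ) : eadd c 0 = 1 := by
  simp [eadd]

lemma eadd_mul_right {d : ℕ} (hd : 0 < d) (c : ℕ) (y : ℤ) : eadd (c * d) (y * d) = eadd c y := by
  rcases Nat.eq_zero_or_pos c with rfl | hc
  · simp [eadd]
  · have : (c : ℂ) ≠ 0 := Nat.cast_ne_zero.mpr hc.ne'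
    have : (d : ℂ) ≠ 0 := Nat.cast_ne_zero.mpr hd.ne'
    simp only [eadd]
    congr 1
    push_cast
    field_simp

lemma eadd_mul_eadd {b₁ b₂ : ℕ} (hb₁ : 0 < b₁) (hb₂ : 0 < b₂) (y₁ y₂ : ℤ) :
    eadd b₁ y₁ * eadd b₂ y₂ = eadd (b₁ * b₂) (y₁ * b₂ + y₂ * b₁) := by
  rw [eadd_add, eadd_mul_right hb₂, mul_comm b₁ b₂, eadd_mul_right hb₁]

lemma sum_range_eadd_mul {c : ℕ} (hc : 0 < c) (a : ℤ) :
    ∑ x ∈ range c, eadd c (x * a) = if (c : ℤ) ∣ a then (c : ℂ) else 0 := by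
  have hpow (x : ℕ) : eadd c (x * a) = eadd c a ^ x := by
    rw [eadd_eq_zpow, eadd_eq_zpow, ← zpow_natCast, ← zpow_mul, mul_comm a]
  simp only [hpow]
  split_ifs with h
  · simp [(eadd_eq_one_iff hc a).mpr h]
  · have hc' : eadd c a ^ c = 1 := by
      rw [← hpow, eadd_eq_one_iff hc]
      exact dvd_mul_right _ _
    rw [geom_sum_eq (mt (eadd_eq_one_iff hc a).mp h), hc', sub_self, zero_div]

def reducedResidues (b : ℕ) : Finset ℕ := {t ∈ range b | t.Coprime b}

def invMod (b t : ℕ) : ℕ := ((t : ZMod b)⁻¹).val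

lemma card_reducedResidues (b : ℕ) : #(reducedResidues b) = b.totient := by
  simp only [reducedResidues, Nat.totient, Nat.coprime_comm]

lemma Kl_eq_sum_reducedResidues (m n : ℤ) (c : ℕ) :
    Kl m n c = ∑ t ∈ reducedResidues c, eadd c (m * t + n * invMod c t) :=
  rfl

lemma coprime_invMod {b t : ℕ} (h : t.Coprime b) : (invMod b t).Coprime b := by
  obtain ⟨u, hu⟩ := (ZMod.isUnit_iff_coprime t b).mpr h
  rw [invMod, ← hu, ZMod.inv_coe_unit]
  exact ZMod.val_coe_unit_coprime u⁻¹

lemma sum_Kl_mul_Kl {b₁ b₂ : ℕ} (hb₁ : 0 < b₁) (hb₂ : 0 < b₂) (m₁ m₂ : ℤ) :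
    ∑ x ∈ range (b₁ * b₂), Kl m₁ x b₁ * Kl m₂ x b₂ =
      (b₁ * b₂ : ℂ) * ∑ t₁ ∈ reducedResidues b₁, ∑ t₂ ∈ reducedResidues b₂,
        if b₁ * b₂ ∣ invMod b₁ t₁ * b₂ + invMod b₂ t₂ * b₁
          then eadd b₁ (m₁ * t₁) * eadd b₂ (m₂ * t₂) else 0 := by
  have hterm (x t₁ t₂ : ℕ) :
      eadd b₁ (m₁ * t₁ + x * invMod b₁ t₁) * eadd b₂ (m₂ * t₂ + x * invMod b₂ t₂) =
        eadd b₁ (m₁ * t₁) * eadd b₂ (m₂ * t₂) *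
          eadd (b₁ * b₂) (x * (invMod b₁ t₁ * b₂ + invMod b₂ t₂ * b₁ : ℕ)) := by
    rw [eadd_add, eadd_add, mul_mul_mul_comm, eadd_mul_eadd hb₁ hb₂ (x * _)]
    push_cast
    ring_nf
  simp only [Kl_eq_sum_reducedResidues, sum_mul_sum, hterm]
  rw [sum_comm, mul_sum]
  refine sum_congr rfl fun t₁ _ => ?_
  rw [sum_comm, mul_sum]
  refine sum_congr rfl fun t₂ _ => ?_
  rw [← mul_sum, sum_range_eadd_mul (Nat.mul_pos hb₁ hb₂)]
  simp only [Int.natCast_dvd_natCast]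
  split_ifs <;> push_cast <;> ring

lemma eq_of_mul_dvd_add_mul {b₁ b₂ v₁ v₂ : ℕ} (h₁ : v₁.Coprime b₁) (h₂ : v₂.Coprime b₂)
    (h : b₁ * b₂ ∣ v₁ * b₂ + v₂ * b₁) : b₁ = b₂ := by
  have hdvd₁ : b₁ ∣ v₁ * b₂ :=
    (Nat.dvd_add_left (dvd_mul_left b₁ v₂)).mp (dvd_trans (dvd_mul_right b₁ b₂) h)
  have hdvd₂ : b₂ ∣ v₂ * b₁ :=
    (Nat.dvd_add_right (dvd_mul_left b₂ v₁)).mp (dvd_trans (dvd_mul_left b₂ b₁) h)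
  exact Nat.dvd_antisymm (h₁.symm.dvd_of_dvd_mul_left hdvd₁) (h₂.symm.dvd_of_dvd_mul_left hdvd₂)

lemma Units.val_inv_add_val_inv_eq_zero_iff {R : Type*} [CommRing R] (u v : Rˣ) :
    ((u⁻¹ : Rˣ) + (v⁻¹ : Rˣ) : R) = 0 ↔ (u + v : R) = 0 := by
  have h : ((u⁻¹ : Rˣ) + (v⁻¹ : Rˣ) : R) = ((u⁻¹ * v⁻¹ : Rˣ) : R) * (u + v) := by
    rw [Units.val_mul, mul_add, mul_right_comm, Units.inv_mul, one_mul, mul_assoc, Units.inv_mul,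
      mul_one, add_comm]
  rw [h, Units.mul_right_eq_zero]

lemma mul_self_dvd_invMod_add_iff {b t₁ t₂ : ℕ} (hb : 0 < b) (h₁ : t₁.Coprime b)
    (h₂ : t₂.Coprime b) : b * b ∣ invMod b t₁ * b + invMod b t₂ * b ↔ b ∣ t₁ + t₂ := by
  have : NeZero b := ⟨hb.ne'⟩
  obtain ⟨u₁, hu₁⟩ := (ZMod.isUnit_iff_coprime t₁ b).mpr h₁
  obtain ⟨u₂, hu₂⟩ := (ZMod.isUnit_iff_coprime t₂ b).mpr h₂
  rw [← add_mul, Nat.mul_dvd_mul_iff_right hb, ← ZMod.natCast_eq_zero_iff,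
    ← ZMod.natCast_eq_zero_iff, Nat.cast_add, Nat.cast_add, invMod, invMod,
    ZMod.natCast_zmod_val, ZMod.natCast_zmod_val, ← hu₁, ← hu₂, ZMod.inv_coe_unit,
    ZMod.inv_coe_unit, Units.val_inv_add_val_inv_eq_zero_iff]

lemma card_filter_dvd_add_eq_one {b t : ℕ} (hb : 0 < b) (ht : t.Coprime b) :
    #{s ∈ reducedResidues b | b ∣ t + s} = 1 := by
  have : NeZero b := ⟨hb.ne'⟩
  rw [card_eq_one]
  refine ⟨(-(t : ZMod b)).val, ext fun s => ?_⟩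
  simp only [reducedResidues, mem_filter, mem_range, mem_singleton, ← ZMod.natCast_eq_zero_iff,
    Nat.cast_add, add_eq_zero_iff_eq_neg']
  constructor
  · rintro ⟨⟨hs, -⟩, hst⟩
    rw [← hst, ZMod.val_cast_of_lt hs]
  · rintro rfl
    obtain ⟨u, hu⟩ := ((ZMod.isUnit_iff_coprime t b).mpr ht).neg
    refine ⟨⟨ZMod.val_lt _, ?_⟩, ZMod.natCast_zmod_val _⟩
    rw [← hu]
    exact ZMod.val_coe_unit_coprime u

lemma sum_sum_ite_mul_self_dvd {b : ℕ} (hb : 0 < b) (m : ℤ) :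
    ∑ t₁ ∈ reducedResidues b, ∑ t₂ ∈ reducedResidues b,
        (if b * b ∣ invMod b t₁ * b + invMod b t₂ * b
          then eadd b (m * t₁) * eadd b (m * t₂) else 0) = b.totient := by
  have hinner (t₁ : ℕ) (h₁ : t₁ ∈ reducedResidues b) :
      ∑ t₂ ∈ reducedResidues b,
        (if b * b ∣ invMod b t₁ * b + invMod b t₂ * b
          then eadd b (m * t₁) * eadd b (m * t₂) else 0) = 1 := by
    rw [← Nat.cast_one, ← card_filter_dvd_add_eq_one hb (mem_filter.mp h₁).2, card_filter,
      Nat.cast_sum]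
    refine sum_congr rfl fun t₂ h₂ => ?_
    simp only [mul_self_dvd_invMod_add_iff hb (mem_filter.mp h₁).2 (mem_filter.mp h₂).2]
    split_ifs with h
    · rw [← eadd_add, ← mul_add, (eadd_eq_one_iff hb _).mpr, Nat.cast_one]
      exact dvd_mul_of_dvd_right (mod_cast h) m
    · rw [Nat.cast_zero]
  rw [sum_congr rfl hinner, sum_const, card_reducedResidues, nsmul_one]

theorem Shat_zero_eval_general
    (b₁ b₂ : ℕ) (hb₁ : 0 < b₁) (hb₂ : 0 < b₂)
    (k : ℤ) :
    Shat b₁ b₂ k 0 = if b₁ = b₂ then (Nat.totient b₁ : ℂ) else 0 := by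
  have hb : (b₁ : ℂ) * b₂ ≠ 0 := by
    simp only [ne_eq, mul_eq_zero, Nat.cast_eq_zero]
    omega
  simp only [Shat, mul_zero, eadd_zero, mul_one]
  rw [sum_Kl_mul_Kl hb₁ hb₂, ← mul_assoc, one_div_mul_cancel hb, one_mul]
  split_ifs with h
  · subst h
    exact sum_sum_ite_mul_self_dvd hb₁ _
  · refine sum_eq_zero fun t₁ h₁ => sum_eq_zero fun t₂ h₂ => if_neg fun hdvd => h ?_
    exact eq_of_mul_dvd_add_mul (coprime_invMod (mem_filter.mp h₁).2)
      (coprime_invMod (mem_filter.mp h₂).2) hdvd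

/-- The diagonal term (from Lemma `Diagonal`): for `(k, b₁b₂) = 1`,
`Ŝ(b₁,b₂,k,0) = φ(b₁)` if `b₁ = b₂`, and `Ŝ(b₁,b₂,k,0) = 0` otherwise. -/
theorem Shat_zero_eval
    (b₁ b₂ : ℕ) (hb₁ : 0 < b₁) (hb₂ : 0 < b₂)
    (k : ℤ) (hk : Int.gcd k ((b₁ : ℤ) * (b₂ : ℤ)) = 1) :
    Shat b₁ b₂ k 0 = if b₁ = b₂ then (Nat.totient b₁ : ℂ) else 0 :=
  Shat_zero_eval_general b₁ b₂ hb₁ hb₂ k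
end

section
/- Let p be a prime, let γ ≥ 1 and μ ≥ 0 be integers, and let χ be a Dirichlet character of modulus p^L with 1 ≤ L ≤ γ + μ and conductor p^{e}. Then Σ_{t mod p^γ, p ∤ t} χ(1 + p^μ t) equals: p^γ − p^{γ−1} if μ ≥ 1 and e ≤ μ; −p^{γ−1} if μ ≥ 1 and e = μ+1; p^γ − 2p^{γ−1} if μ = 0 and e = 0; −p^{γ−1} if μ = 0 and e = 1; and 0 in all remaining cases. -/
/-!
Lift `χ` to the level `p ^ (γ + μ)`, where `t ↦ 1 + p ^ μ * t` for `t < p ^ γ` enumerates the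
residue class of `1` modulo `p ^ μ` exactly once. The sum of a character over that class vanishes
unless the character factors through `p ^ μ`, i.e. unless `e ≤ μ`: multiplying by a unit
`u ≡ 1 mod p ^ μ` with `χ u ≠ 1` permutes the class. When `e ≤ μ` and `μ ≥ 1` every term is `1`;
when `μ = 0` the character is trivial and the sum counts the units. The terms with `p ∣ t` form
the same sum for `(μ + 1, γ - 1)`, and subtracting it gives the stated values.
-/

open Finset DirichletCharacter

theorem Finset.sum_filter_dvd_range_mul {M : Type*} [AddCommMonoid M] {p : ℕ} (hp : 0 < p)
    (m : ℕ) (f : ℕ → M) :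
    ∑ t ∈ range (p * m) with p ∣ t, f t = ∑ s ∈ range m, f (p * s) := by
  have himage : {t ∈ range (p * m) | p ∣ t} = (range m).image (p * ·) := by
    ext t
    simp only [mem_filter, mem_range, mem_image]
    constructor
    · rintro ⟨ht, s, rfl⟩
      exact ⟨s, Nat.lt_of_mul_lt_mul_left ht, rfl⟩
    · rintro ⟨s, hs, rfl⟩
      exact ⟨Nat.mul_lt_mul_of_pos_left hs hp, dvd_mul_right p s⟩
  rw [himage, sum_image fun a _ b _ h => Nat.eq_of_mul_eq_mul_left hp h]

theorem ZMod.sum_range_natCast_add_mul {M : Type*} [AddCommMonoid M] {n m N : ℕ} [NeZero N]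
    (h : n * m = N) (a : ℕ) (f : ZMod N → M) :
    ∑ t ∈ range m, f ((a + n * t : ℕ) : ZMod N)
      = ∑ x with ZMod.castHom (Dvd.intro m h) (ZMod n) x = a, f x := by
  subst h
  have hn : 0 < n := Nat.pos_of_ne_zero (left_ne_zero_of_mul (NeZero.ne (n * m)))
  refine sum_nbij' (fun t => ((a + n * t : ℕ) : ZMod (n * m)))
    (fun x => (x - (a : ZMod (n * m))).val / n) ?_ ?_ ?_ ?_ fun _ _ => rfl
  · intro t _
    simp only [mem_filter, mem_univ, true_and]
    rw [map_natCast, Nat.cast_add, Nat.cast_mul, ZMod.natCast_self, zero_mul, add_zero]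
  · intro x _
    simpa [Nat.div_lt_iff_lt_mul hn, mul_comm] using ZMod.val_lt (x - (a : ZMod (n * m)))
  · intro t ht
    have hlt : n * t < n * m := Nat.mul_lt_mul_of_pos_left (mem_range.mp ht) hn
    simp only [Nat.cast_add, Nat.cast_mul, add_sub_cancel_left]
    rw [← Nat.cast_mul, ZMod.val_cast_of_lt hlt, Nat.mul_div_cancel_left t hn]
  · intro x hx
    have hdvd : n ∣ (x - (a : ZMod (n * m))).val := by
      rw [← ZMod.natCast_eq_zero_iff, ← map_natCast (ZMod.castHom (Dvd.intro m rfl) (ZMod n)),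
        ZMod.natCast_zmod_val, map_sub, (mem_filter.mp hx).2, map_natCast, sub_self]
    simp [Nat.mul_div_cancel' hdvd]

namespace DirichletCharacter

variable {R : Type*}

theorem changeLevel_pow_apply_natCast [CommMonoidWithZero R] {p L N : ℕ} (hp : p.Prime)
    (hL : 0 < L) (hLN : L ≤ N) (χ : DirichletCharacter R (p ^ L)) (k : ℕ) :
    changeLevel (pow_dvd_pow p hLN) χ k = χ k := by
  by_cases hk : p ∣ k
  · have hnu : ∀ {M}, 0 < M → ¬IsUnit (k : ZMod (p ^ M)) := fun hM =>
      fun h => (ZMod.isUnit_natCast_iff_not_dvd_pow hp hM).mp h hk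
    rw [MulChar.map_nonunit _ (hnu (hL.trans_le hLN)), MulChar.map_nonunit _ (hnu hL)]
  · have hcop : IsCoprime (k : ℤ) ((p ^ N : ℕ) : ℤ) := by
      rw [Nat.isCoprime_iff_coprime, Nat.coprime_pow_right_iff (hL.trans_le hLN),
        Nat.coprime_comm, hp.coprime_iff_not_dvd]
      exact hk
    simpa using changeLevel_eq_cast_of_dvd' χ (pow_dvd_pow p hLN) hcop

theorem FactorsThrough.apply_eq_one_of_castHom_eq_one [CommMonoidWithZero R] {N d : ℕ}
    {χ : DirichletCharacter R N} (hχ : χ.FactorsThrough d) {x : ZMod N} (hx : IsUnit x)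
    (h : ZMod.castHom hχ.dvd (ZMod d) x = 1) : χ x = 1 := by
  obtain ⟨hd, χ₀, rfl⟩ := hχ
  obtain ⟨u, rfl⟩ := hx
  rw [ZMod.castHom_apply] at h
  rw [changeLevel_eq_cast_of_dvd, h, map_one]

theorem sum_filter_castHom_eq_one_eq_zero [CommRing R] [IsDomain R] {N d : ℕ} [NeZero N]
    (χ : DirichletCharacter R N) (hd : d ∣ N) (hχ : ¬χ.FactorsThrough d) :
    ∑ x with ZMod.castHom hd (ZMod d) x = 1, χ x = 0 := by
  rw [factorsThrough_iff_ker_unitsMap hd, SetLike.not_le_iff_exists] at hχ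
  obtain ⟨u, hu_ker, hu_not_ker⟩ := hχ
  have hu : ZMod.castHom hd (ZMod d) u = 1 := by
    simpa [ZMod.unitsMap_def, Units.ext_iff] using hu_ker
  have hχu : χ u ≠ 1 := by
    simpa [MonoidHom.mem_ker, Units.ext_iff] using hu_not_ker
  rw [sum_filter]
  by_contra hS
  refine hχu ((mul_eq_right₀ hS).mp ?_)
  calc χ u * ∑ x, (if ZMod.castHom hd (ZMod d) x = 1 then χ x else 0)
      = ∑ x, (if ZMod.castHom hd (ZMod d) (u * x) = 1 then χ (u * x) else 0) := by
        simp only [mul_sum, mul_ite, mul_zero, map_mul, hu, one_mul]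
    _ = _ := Equiv.sum_comp (Units.mulLeft u)
        (fun x => if ZMod.castHom hd (ZMod d) x = 1 then χ x else 0)

section PrimePowerLevel

variable [CommRing R] [IsDomain R] {p N e : ℕ} (hp : p.Prime)
  {ψ : DirichletCharacter R (p ^ N)} (he : ψ.conductor = p ^ e)
include hp he

theorem sum_range_one_add_pow_mul_eq_zero {μ γ : ℕ} (hN : μ + γ = N) (hμe : μ < e) :
    ∑ t ∈ range (p ^ γ), ψ ((1 + p ^ μ * t : ℕ) : ZMod (p ^ N)) = 0 := by
  have : NeZero (p ^ N) := ⟨pow_ne_zero N hp.ne_zero⟩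
  have hdvd : p ^ μ ∣ p ^ N := pow_dvd_pow p (by omega)
  rw [ZMod.sum_range_natCast_add_mul (by rw [← pow_add, hN]), Nat.cast_one]
  refine sum_filter_castHom_eq_one_eq_zero ψ hdvd fun hψ => ?_
  rw [← mem_conductorSet_iff, mem_conductorSet_iff_conductor_dvd ψ hdvd, he,
    Nat.pow_dvd_pow_iff_le_right hp.one_lt] at hψ
  omega

theorem sum_range_one_add_pow_mul {μ γ : ℕ} (hμ : 0 < μ) (hN : μ + γ = N) :
    ∑ t ∈ range (p ^ γ), ψ ((1 + p ^ μ * t : ℕ) : ZMod (p ^ N))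
      = if e ≤ μ then (p : R) ^ γ else 0 := by
  split_ifs with heμ
  · have : NeZero (p ^ N) := ⟨pow_ne_zero N hp.ne_zero⟩
    have hψ : ψ.FactorsThrough (p ^ μ) := by
      rw [← mem_conductorSet_iff, mem_conductorSet_iff_conductor_dvd ψ (pow_dvd_pow p (by omega)),
        he]
      exact pow_dvd_pow p heμ
    have hterm : ∀ t : ℕ, ψ ((1 + p ^ μ * t : ℕ) : ZMod (p ^ N)) = 1 := fun t => by
      refine hψ.apply_eq_one_of_castHom_eq_one ?_ ?_
      · rw [ZMod.isUnit_natCast_iff_not_dvd_pow hp (by omega),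
          Nat.dvd_add_left (dvd_mul_of_dvd_left (dvd_pow_self p hμ.ne') t)]
        exact hp.not_dvd_one
      · rw [map_natCast, Nat.cast_add, Nat.cast_mul, ZMod.natCast_self, zero_mul, add_zero,
          Nat.cast_one]
    rw [sum_congr rfl fun t _ => hterm t, sum_const, card_range, nsmul_one, Nat.cast_pow]
  · exact sum_range_one_add_pow_mul_eq_zero hp he hN (by omega)

theorem sum_range_one_add {γ : ℕ} (hN : N = γ + 1) :
    ∑ t ∈ range (p ^ (γ + 1)), ψ ((1 + t : ℕ) : ZMod (p ^ N))
      = if e = 0 then (p : R) ^ (γ + 1) - (p : R) ^ γ else 0 := by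
  subst hN
  split_ifs with he0
  · have : NeZero (p ^ (γ + 1)) := ⟨pow_ne_zero _ hp.ne_zero⟩
    have hψ : ψ = 1 := by rw [eq_one_iff_conductor_eq_one, he, he0, pow_zero]
    have hall := ZMod.sum_range_natCast_add_mul (one_mul (p ^ (γ + 1))) 1 ψ
    rw [filter_true_of_mem fun x _ => Subsingleton.elim _ _] at hall
    simp only [one_mul] at hall
    rw [hall, hψ, MulChar.sum_one_eq_card_units, ZMod.card_units_eq_totient,
      Nat.totient_prime_pow_succ hp, Nat.cast_mul, Nat.cast_sub hp.one_le]
    push_cast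
    ring
  · simpa using sum_range_one_add_pow_mul_eq_zero hp he (μ := 0) (zero_add _) (by omega)

end PrimePowerLevel

end DirichletCharacter

/-- Evaluation of the character sum `Σ_{t mod p^γ, p ∤ t} χ(1 + p^μ t)` for a
Dirichlet character `χ` of modulus `p^L` (with `1 ≤ L ≤ γ + μ`) and conductor `p^e`:
it equals `p^γ - p^{γ-1}` if `μ ≥ 1` and `e ≤ μ`; `-p^{γ-1}` if `μ ≥ 1` and `e = μ+1`;
`p^γ - 2p^{γ-1}` if `μ = 0` and `e = 0`; `-p^{γ-1}` if `μ = 0` and `e = 1`;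
and `0` in all remaining cases. -/
theorem character_sum_eval
    (p : ℕ) (hp : p.Prime) (γ μ L e : ℕ) (hγ : 1 ≤ γ)
    (hL₁ : 1 ≤ L) (hL₂ : L ≤ γ + μ)
    (χ : DirichletCharacter ℂ (p ^ L)) (he : χ.conductor = p ^ e) :
    ∑ t ∈ Finset.filter (fun t => ¬ (p ∣ t)) (Finset.range (p ^ γ)),
        χ (((1 + p ^ μ * t : ℕ) : ZMod (p ^ L)))
      = if 1 ≤ μ ∧ e ≤ μ then ((p : ℂ) ^ γ - (p : ℂ) ^ (γ - 1))
        else if 1 ≤ μ ∧ e = μ + 1 then -((p : ℂ) ^ (γ - 1))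
        else if μ = 0 ∧ e = 0 then ((p : ℂ) ^ γ - 2 * (p : ℂ) ^ (γ - 1))
        else if μ = 0 ∧ e = 1 then -((p : ℂ) ^ (γ - 1))
        else 0 := by
  obtain ⟨γ, rfl⟩ := Nat.exists_eq_add_of_le' hγ
  have hLN : L ≤ μ + (γ + 1) := by omega
  have : NeZero (p ^ (μ + (γ + 1))) := ⟨pow_ne_zero _ hp.ne_zero⟩
  set ψ := changeLevel (pow_dvd_pow p hLN) χ
  have hψ : ψ.conductor = p ^ e := (conductor_changeLevel χ _).trans he
  simp_rw [← changeLevel_pow_apply_natCast hp hL₁ hLN χ, Nat.add_sub_cancel]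
  have hsplit := sum_filter_not_add_sum_filter (range (p ^ (γ + 1))) (p ∣ ·)
    fun t => ψ ((1 + p ^ μ * t : ℕ) : ZMod (p ^ (μ + (γ + 1))))
  have hmultiples : ∑ t ∈ range (p ^ (γ + 1)) with p ∣ t,
      ψ ((1 + p ^ μ * t : ℕ) : ZMod (p ^ (μ + (γ + 1))))
        = ∑ s ∈ range (p ^ γ), ψ ((1 + p ^ (μ + 1) * s : ℕ) : ZMod (p ^ (μ + (γ + 1)))) := by
    rw [pow_succ' p γ, sum_filter_dvd_range_mul hp.pos]
    simp_rw [pow_succ, mul_assoc]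
  rw [eq_sub_of_add_eq hsplit, hmultiples,
    sum_range_one_add_pow_mul hp hψ (μ := μ + 1) μ.succ_pos (by omega)]
  rcases Nat.eq_zero_or_pos μ with rfl | hμ
  · simp only [pow_zero, one_mul, true_and]
    rw [sum_range_one_add hp hψ (zero_add _)]
    split_ifs <;> first | omega | ring
  · rw [sum_range_one_add_pow_mul hp hψ hμ rfl]
    split_ifs <;> first | omega | ring
end
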